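/- arXiv:1112.1325 — 8 statements merged into one kernel-verified Lean document; each statement's English description precedes it below -/
import Mathlib

section
/- Let P be an m×m1 complex matrix (m = m1+m2) with P*P > 0 and P* j P ≥ 0, where j = diag(I_{m1}, -I_{m2}). Write P = [P1; P2] with P1 the upper m1×m1 block and P2 the lower m2×m1 block. Then P1 is invertible and P2 P1⁻¹ is non-expansive: (P2 P1⁻¹)* (P2 P1⁻¹) ≤ I_{m1}. -/
/-!
Writing `P = [P1; P2]`, the hypotheses read `P1ᴴP1 + P2ᴴP2 > 0` and `P1ᴴP1 - P2ᴴP2 ≥ 0`.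
Their average `P1ᴴP1` is positive definite, so `P1` is invertible, and congruence by `P1⁻¹` turns
`P1ᴴP1 - P2ᴴP2 ≥ 0` into `1 - (P2 P1⁻¹)ᴴ (P2 P1⁻¹) ≥ 0`.
-/

open Matrix
open scoped ComplexOrder

namespace Matrix

variable {m₁ m₂ m n : Type*}

section Blocks

variable {R : Type*} [Ring R] [StarRing R] [Fintype m₁] [Fintype m₂]

theorem conjTranspose_fromRows_mul_fromRows (A : Matrix m₁ n R) (B : Matrix m₂ n R) :
    (fromRows A B)ᴴ * fromRows A B = Aᴴ * A + Bᴴ * B := by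
  rw [conjTranspose_fromRows_eq_fromCols_conjTranspose, fromCols_mul_fromRows]

theorem conjTranspose_fromRows_mul_fromBlocks_one_neg_one_mul_fromRows
    [DecidableEq m₁] [DecidableEq m₂] (A : Matrix m₁ n R) (B : Matrix m₂ n R) :
    (fromRows A B)ᴴ * (fromBlocks 1 0 0 (-1) : Matrix (m₁ ⊕ m₂) (m₁ ⊕ m₂) R) * fromRows A B =
      Aᴴ * A - Bᴴ * B := by
  rw [Matrix.mul_assoc, fromBlocks_mul_fromRows, conjTranspose_fromRows_eq_fromCols_conjTranspose,
    fromCols_mul_fromRows]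
  simp [sub_eq_add_neg]

end Blocks

theorem PosDef.of_add_of_sub {𝕜 : Type*} [RCLike 𝕜] [Fintype n] {X Y : Matrix n n 𝕜}
    (hadd : (X + Y).PosDef) (hsub : (X - Y).PosSemidef) : X.PosDef := by
  have h := (hadd.add_posSemidef hsub).smul (show (0 : ℝ) < 2⁻¹ by norm_num)
  rwa [add_add_sub_cancel, ← two_smul ℝ X, smul_smul, inv_mul_cancel₀ two_ne_zero, one_smul] at h

theorem PosSemidef.one_sub_conjTranspose_mul_self_mul_inv {K : Type*} [Field K] [PartialOrder K]
    [StarRing K] [Fintype m] [Fintype n] [DecidableEq n] {A : Matrix n n K} {B : Matrix m n K}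
    (hA : IsUnit A) (h : (Aᴴ * A - Bᴴ * B).PosSemidef) :
    (1 - (B * A⁻¹)ᴴ * (B * A⁻¹)).PosSemidef := by
  have hinv : A * A⁻¹ = 1 := mul_nonsing_inv A ((isUnit_iff_isUnit_det A).1 hA)
  have hcongr : 1 - (B * A⁻¹)ᴴ * (B * A⁻¹) = (A⁻¹)ᴴ * (Aᴴ * A - Bᴴ * B) * A⁻¹ := by
    simp only [Matrix.mul_sub, Matrix.sub_mul, conjTranspose_mul, Matrix.mul_assoc]
    rw [hinv, Matrix.mul_one, ← conjTranspose_mul, hinv, conjTranspose_one]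
  rw [hcongr]
  exact h.conjTranspose_mul_mul_same A⁻¹

end Matrix

theorem stmt_2_general (m1 m2 : ℕ)
    (j : Matrix (Fin m1 ⊕ Fin m2) (Fin m1 ⊕ Fin m2) ℂ)
    (hj : j = Matrix.fromBlocks 1 0 0 (-1))
    (P : Matrix (Fin m1 ⊕ Fin m2) (Fin m1) ℂ)
    (hP : (Pᴴ * P).PosDef)
    (hPj : (Pᴴ * j * P).PosSemidef)
    (P1 : Matrix (Fin m1) (Fin m1) ℂ) (hP1 : P1 = P.submatrix Sum.inl id)
    (P2 : Matrix (Fin m2) (Fin m1) ℂ) (hP2 : P2 = P.submatrix Sum.inr id) :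
    IsUnit P1 ∧
      ((1 : Matrix (Fin m1) (Fin m1) ℂ) - (P2 * P1⁻¹)ᴴ * (P2 * P1⁻¹)).PosSemidef := by
  obtain rfl : P = fromRows P1 P2 := by
    rw [hP1, hP2]
    exact (fromRows_toRows P).symm
  subst hj
  rw [conjTranspose_fromRows_mul_fromRows] at hP
  rw [conjTranspose_fromRows_mul_fromBlocks_one_neg_one_mul_fromRows] at hPj
  have hU : IsUnit P1 := isUnit_of_mul_isUnit_right (hP.of_add_of_sub hPj).isUnit
  exact ⟨hU, hPj.one_sub_conjTranspose_mul_self_mul_inv hU⟩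

/-- If `P : ℂ^{m×m1}` satisfies `PᴴP > 0` and `Pᴴ j P ≥ 0` with
`j = diag(I_{m1}, -I_{m2})`, then the top block `P1` is invertible and
`P2 P1⁻¹` is non-expansive. -/
theorem stmt_2 (m1 m2 : ℕ) (hm1 : 0 < m1) (hm2 : 0 < m2)
    (j : Matrix (Fin m1 ⊕ Fin m2) (Fin m1 ⊕ Fin m2) ℂ)
    (hj : j = Matrix.fromBlocks 1 0 0 (-1))
    (P : Matrix (Fin m1 ⊕ Fin m2) (Fin m1) ℂ)
    (hP : (Pᴴ * P).PosDef)
    (hPj : (Pᴴ * j * P).PosSemidef)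
    (P1 : Matrix (Fin m1) (Fin m1) ℂ) (hP1 : P1 = P.submatrix Sum.inl id)
    (P2 : Matrix (Fin m2) (Fin m1) ℂ) (hP2 : P2 = P.submatrix Sum.inr id) :
    IsUnit P1 ∧
      ((1 : Matrix (Fin m1) (Fin m1) ℂ) - (P2 * P1⁻¹)ᴴ * (P2 * P1⁻¹)).PosSemidef :=
  stmt_2_general m1 m2 j hj P hP hPj P1 hP1 P2 hP2
end

section
/- Let u be an invertible m×m matrix with (u*)⁻¹ j u⁻¹ ≥ j, where j = diag(I_{m1}, -I_{m2}), and let P be an m×m1 matrix with P*P > 0 and P* j P ≥ 0. Then the upper m1×m1 block [I_{m1} 0] u⁻¹ P of u⁻¹P is invertible. -/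
open Matrix
open scoped ComplexOrder

/-!
Put `Q = u⁻¹ P`. Then `Qᴴ j Q = Pᴴ ((uᴴ)⁻¹ j u⁻¹ - j) P + Pᴴ j P ≥ 0`. If the top block of `Q`
kills `x`, then `y = Q x` has zero top part, so `yᴴ j y = -‖y‖² ≥ 0` forces `y = 0`; hence
`P x = u y = 0`, and `x = 0` because `Pᴴ P > 0`.
-/

namespace Matrix

variable {m n k R 𝕜 : Type*} [Fintype m] [Fintype n]

lemma PosSemidef.conjTranspose_mul_mul_mul_same [Ring R] [PartialOrder R] [StarRing R]
    [AddLeftMono R] [Finite k] {J B : Matrix n n R} {P : Matrix n k R}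
    (hB : (Bᴴ * J * B - J).PosSemidef) (hP : (Pᴴ * J * P).PosSemidef) :
    ((B * P)ᴴ * J * (B * P)).PosSemidef := by
  have hsplit : (B * P)ᴴ * J * (B * P) = Pᴴ * (Bᴴ * J * B - J) * P + Pᴴ * J * P := by
    simp only [conjTranspose_mul, Matrix.mul_sub, Matrix.sub_mul, Matrix.mul_assoc, sub_add_cancel]
  rw [hsplit]
  exact (hB.conjTranspose_mul_mul_same P).add hP

lemma mulVec_injective_of_posDef_conjTranspose_mul_self [RCLike 𝕜] {A : Matrix m n 𝕜}
    (hA : (Aᴴ * A).PosDef) : Function.Injective A.mulVec := by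
  classical
  intro x y hxy
  apply mulVec_injective_iff_isUnit.mpr hA.isUnit
  simp only [← mulVec_mulVec, hxy]

lemma eq_zero_of_dotProduct_fromBlocks_one_neg_one_nonneg [RCLike 𝕜] [DecidableEq m]
    [DecidableEq n] {y : m ⊕ n → 𝕜} (hy : y ∘ Sum.inl = 0)
    (hJ : 0 ≤ star y ⬝ᵥ (fromBlocks 1 0 0 (-1) *ᵥ y)) : y = 0 := by
  have hform : star y ⬝ᵥ (fromBlocks 1 0 0 (-1) *ᵥ y) = -(star (y ∘ Sum.inr) ⬝ᵥ (y ∘ Sum.inr)) := by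
    simp [fromBlocks_mulVec, dotProduct, Fintype.sum_sum_type, hy, neg_mulVec]
  have hinr : y ∘ Sum.inr = 0 := dotProduct_star_self_eq_zero.mp <|
    le_antisymm (neg_nonneg.mp (hform ▸ hJ)) (dotProduct_star_self_nonneg _)
  ext (i | i)
  · exact congrFun hy i
  · exact congrFun hinr i

end Matrix

/-- If `u` is invertible with `(uᴴ)⁻¹ j u⁻¹ ≥ j` and `P` satisfies `PᴴP > 0`,
`Pᴴ j P ≥ 0`, then the top `m1 × m1` block of `u⁻¹ P` is invertible. -/
theorem stmt_3 (m1 m2 : ℕ)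
    (j : Matrix (Fin m1 ⊕ Fin m2) (Fin m1 ⊕ Fin m2) ℂ)
    (hj : j = Matrix.fromBlocks 1 0 0 (-1))
    (u : Matrix (Fin m1 ⊕ Fin m2) (Fin m1 ⊕ Fin m2) ℂ)
    (hu : IsUnit u)
    (h : ((uᴴ)⁻¹ * j * u⁻¹ - j).PosSemidef)
    (P : Matrix (Fin m1 ⊕ Fin m2) (Fin m1) ℂ)
    (hP : (Pᴴ * P).PosDef)
    (hPj : (Pᴴ * j * P).PosSemidef) :
    IsUnit ((u⁻¹ * P).submatrix Sum.inl (id : Fin m1 → Fin m1)) := by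
  rw [← conjTranspose_nonsing_inv] at h
  have hQ := h.conjTranspose_mul_mul_mul_same hPj
  rw [← mulVec_injective_iff_isUnit, ← coe_mulVecLin, injective_iff_map_eq_zero]
  intro x hx
  have hQx : (u⁻¹ * P) *ᵥ x = 0 := by
    subst hj
    refine eq_zero_of_dotProduct_fromBlocks_one_neg_one_nonneg (funext fun i => congrFun hx i) ?_
    simpa only [star_mulVec, dotProduct_mulVec, vecMul_vecMul, ← Matrix.mul_assoc] using
      hQ.dotProduct_mulVec_nonneg x
  have hPx : P *ᵥ x = 0 := by
    rw [← Matrix.mul_nonsing_inv_cancel_left _ P ((isUnit_iff_isUnit_det u).mp hu),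
      ← mulVec_mulVec, hQx, mulVec_zero]
  exact mulVec_injective_of_posDef_conjTranspose_mul_self hP (hPx.trans (mulVec_zero P).symm)
end

section
/- Let 𝔄 be a Hermitian m×m matrix with blocks 𝔄11, 𝔄12, 𝔄21 = 𝔄12*, 𝔄22, where -𝔄22 is positive definite. Then for an m2×m1 matrix φ̂, the inequality [I φ̂*] 𝔄 [I; φ̂] ≥ 0 holds if and only if there exists an m2×m1 non-expansive matrix ω (ω*ω ≤ I_{m1}) such that φ̂ = ρ_l ω ρ_r - 𝔄22⁻¹ 𝔄21, where ρ_l = (-𝔄22)^{-1/2} and ρ_r = (𝔄11 - 𝔄12 𝔄22⁻¹ 𝔄21)^{1/2}. -/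
/-!
Completing the square with respect to `𝔄₂₂` turns the quadratic form into `S - θᴴ θ`, where
`S = ρ_r²` is the Schur complement and `θ = ρ_l⁻¹ (φ̂ + 𝔄₂₂⁻¹ 𝔄₂₁)`, `ρ_l⁻¹ = (-𝔄₂₂)^{1/2}`; the
parametrisation of `φ̂` is exactly `θ = ω ρ_r`. So the claim is Douglas' factorisation:
`θᴴ θ ≤ ρᴴ ρ` iff `θ = ω ρ` with `ω` contractive. For the nontrivial direction take `ω = θ ρ⁺`
with `ρ⁺` the Moore–Penrose inverse of the Hermitian matrix `ρ`; the inequality forces `θ` to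
vanish on `ker ρ`, so `θ ρ⁺ ρ = θ`.
-/

open Matrix
open scoped ComplexOrder

noncomputable def Matrix.PosSemidef.sqrt {n 𝕜 : Type*} [Fintype n] [DecidableEq n] [RCLike 𝕜]
    {A : Matrix n n 𝕜} (hA : A.PosSemidef) : Matrix n n 𝕜 :=
  (hA.1.eigenvectorUnitary : Matrix n n 𝕜) * diagonal ((↑) ∘ (√·) ∘ hA.1.eigenvalues) *
    (star hA.1.eigenvectorUnitary : Matrix n n 𝕜)

open scoped MatrixOrder

namespace Matrix

section CommRing

variable {k l α : Type*} [Fintype l] [DecidableEq l] [CommRing α]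

theorem add_add_add_eq_sub_add [Fintype k] [StarRing α] (A : Matrix k k α) (B : Matrix l k α)
    {D : Matrix l l α} (hD : D.IsHermitian) (hDu : IsUnit D.det) (φ : Matrix l k α) :
    A + Bᴴ * φ + φᴴ * B + φᴴ * D * φ =
      (A - Bᴴ * D⁻¹ * B) + (φ + D⁻¹ * B)ᴴ * D * (φ + D⁻¹ * B) := by
  have hDD (X : Matrix l k α) : D * (D⁻¹ * X) = X := by
    rw [← Matrix.mul_assoc, mul_nonsing_inv _ hDu, Matrix.one_mul]
  have hDD' (X : Matrix l k α) : D⁻¹ * (D * X) = X := by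
    rw [← Matrix.mul_assoc, nonsing_inv_mul _ hDu, Matrix.one_mul]
  rw [conjTranspose_add, conjTranspose_mul, conjTranspose_nonsing_inv, hD.eq]
  simp only [Matrix.add_mul, Matrix.mul_add, Matrix.mul_assoc, hDD, hDD']
  abel

theorem mul_add_eq_iff_eq_inv_mul_sub {L : Matrix l l α} (hL : IsUnit L) (ψ X Y : Matrix l k α) :
    L * (ψ + X) = Y ↔ ψ = L⁻¹ * Y - X := by
  let := hL.invertible
  rw [eq_sub_iff_add_eq, eq_comm (a := ψ + X), inv_mul_eq_iff_eq_mul_of_invertible, eq_comm]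

end CommRing

variable {l m n 𝕜 : Type*} [Fintype m] [Fintype n] [RCLike 𝕜]

theorem conjTranspose_mul_sub_mul_eq [Fintype l] (ρ : Matrix l n 𝕜) (θ : Matrix m n 𝕜)
    (Q : Matrix n n 𝕜) :
    Qᴴ * (ρᴴ * ρ - θᴴ * θ) * Q = (ρ * Q)ᴴ * (ρ * Q) - (θ * Q)ᴴ * (θ * Q) := by
  simp only [conjTranspose_mul, Matrix.mul_sub, Matrix.sub_mul, Matrix.mul_assoc]

variable [DecidableEq n]

theorem PosSemidef.sqrt_eq_cfcSqrt {A : Matrix n n 𝕜} (hA : A.PosSemidef) :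
    hA.sqrt = CFC.sqrt A := by
  rw [CFC.sqrt_eq_cfc, cfc_nnreal_eq_real _ A hA.nonneg, hA.1.cfc_eq, IsHermitian.cfc,
    Unitary.conjStarAlgAut_apply, PosSemidef.sqrt]
  congr! with x
  rcases le_total x 0 with hx | hx <;> simp [hx, Real.sqrt_eq_zero_of_nonpos]

theorem isHermitian_cfcSqrt (A : Matrix n n 𝕜) : (CFC.sqrt A).IsHermitian :=
  (CFC.sqrt_nonneg A).posSemidef.isHermitian

theorem PosSemidef.conjTranspose_cfcSqrt_mul_cfcSqrt {A : Matrix n n 𝕜} (hA : A.PosSemidef) :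
    (CFC.sqrt A)ᴴ * CFC.sqrt A = A := by
  rw [(isHermitian_cfcSqrt A).eq, CFC.sqrt_mul_sqrt_self A hA.nonneg]

theorem IsHermitian.exists_isHermitian_commute_and_mul_mul_eq {ρ : Matrix n n 𝕜}
    (hρ : ρ.IsHermitian) :
    ∃ R : Matrix n n 𝕜, R.IsHermitian ∧ Commute R ρ ∧ ρ * R * ρ = ρ := by
  have hmul (f g : ℝ → ℝ) : cfc f ρ * cfc g ρ = cfc (fun x => f x * g x) ρ :=
    (cfc_mul f g ρ (ρ.finite_real_spectrum.continuousOn f)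
      (ρ.finite_real_spectrum.continuousOn g)).symm
  have hid : cfc (fun x : ℝ => x) ρ = ρ := cfc_id' ℝ ρ hρ
  -- the Moore–Penrose inverse: `0⁻¹ = 0` inverts `ρ` exactly on its range
  refine ⟨cfc (·⁻¹ : ℝ → ℝ) ρ, cfc_predicate _ ρ, ?_, ?_⟩
  · simpa only [hid] using cfc_commute_cfc (·⁻¹ : ℝ → ℝ) (fun x => x) ρ
  · calc ρ * cfc (·⁻¹ : ℝ → ℝ) ρ * ρ = cfc (fun x : ℝ => x * x⁻¹ * x) ρ := by
          rw [← hmul, ← hmul, hid]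
      _ = ρ := by simp only [mul_inv_mul_cancel, hid]

theorem IsHermitian.exists_posSemidef_one_sub_and_eq_mul {ρ : Matrix n n 𝕜}
    (hρ : ρ.IsHermitian) {θ : Matrix m n 𝕜} (h : (ρᴴ * ρ - θᴴ * θ).PosSemidef) :
    ∃ ω : Matrix m n 𝕜, (1 - ωᴴ * ω).PosSemidef ∧ θ = ω * ρ := by
  obtain ⟨R, hR, hRρ, hρRρ⟩ := hρ.exists_isHermitian_commute_and_mul_mul_eq
  set P := R * ρ with hP
  have hPH : Pᴴ = P := by rw [conjTranspose_mul, hρ.eq, hR.eq]; exact hRρ.eq.symm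
  have hPP : IsIdempotentElem P := by
    rw [IsIdempotentElem, hP, Matrix.mul_assoc, ← Matrix.mul_assoc ρ, hρRρ]
  have hρQ : ρ * (1 - P) = 0 := by
    rw [Matrix.mul_sub, Matrix.mul_one, hP, ← Matrix.mul_assoc, hρRρ, sub_self]
  have hQ : (1 - P).PosSemidef := by
    have : (1 - P)ᴴ * (1 - P) = 1 - P := by
      rw [conjTranspose_sub, conjTranspose_one, hPH, hPP.one_sub.eq]
    exact this ▸ posSemidef_conjTranspose_mul_self (1 - P)
  have hθQ : θ * (1 - P) = 0 := by
    have hneg : (-((θ * (1 - P))ᴴ * (θ * (1 - P)))).PosSemidef := by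
      have := h.conjTranspose_mul_mul_same (1 - P)
      rwa [conjTranspose_mul_sub_mul_eq, hρQ, Matrix.mul_zero, zero_sub] at this
    refine conjTranspose_mul_self_eq_zero.mp (le_antisymm ?_ ?_)
    · rwa [le_iff, zero_sub]
    · exact (posSemidef_conjTranspose_mul_self _).nonneg
  refine ⟨θ * R, ?_, ?_⟩
  · have hρR : (ρ * R)ᴴ * (ρ * R) = P := by rw [← hRρ.eq, hPH, hPP.eq]
    have : 1 - (θ * R)ᴴ * (θ * R) = (1 - P) + Rᴴ * (ρᴴ * ρ - θᴴ * θ) * R := by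
      rw [conjTranspose_mul_sub_mul_eq, hρR, sub_add_sub_cancel]
    exact this ▸ hQ.add (h.conjTranspose_mul_mul_same R)
  · calc θ = θ * P + θ * (1 - P) := by rw [Matrix.mul_sub, Matrix.mul_one, add_sub_cancel]
      _ = θ * R * ρ := by rw [hθQ, add_zero, hP, Matrix.mul_assoc]

theorem IsHermitian.posSemidef_conjTranspose_mul_self_sub_iff {ρ : Matrix n n 𝕜}
    (hρ : ρ.IsHermitian) (θ : Matrix m n 𝕜) :
    (ρᴴ * ρ - θᴴ * θ).PosSemidef ↔
      ∃ ω : Matrix m n 𝕜, (1 - ωᴴ * ω).PosSemidef ∧ θ = ω * ρ := by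
  refine ⟨hρ.exists_posSemidef_one_sub_and_eq_mul, ?_⟩
  rintro ⟨ω, hω, rfl⟩
  convert hω.conjTranspose_mul_mul_same ρ using 1
  simp only [Matrix.mul_sub, Matrix.sub_mul, Matrix.mul_one, conjTranspose_mul, Matrix.mul_assoc]

end Matrix

theorem stmt_4_general (m1 m2 : ℕ)
    (A11 : Matrix (Fin m1) (Fin m1) ℂ) (A12 : Matrix (Fin m1) (Fin m2) ℂ)
    (A21 : Matrix (Fin m2) (Fin m1) ℂ) (A22 : Matrix (Fin m2) (Fin m2) ℂ)
    (h12 : A12 = A21ᴴ)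
    (hA22pos : (-A22).PosDef)
    (hSchur : (A11 - A12 * A22⁻¹ * A21).PosSemidef)
    (ρl : Matrix (Fin m2) (Fin m2) ℂ)
    (hρl : ρl = (hA22pos.inv.posSemidef).sqrt)
    (ρr : Matrix (Fin m1) (Fin m1) ℂ)
    (hρr : ρr = hSchur.sqrt)
    (φ : Matrix (Fin m2) (Fin m1) ℂ) :
    (A11 + A12 * φ + φᴴ * A21 + φᴴ * A22 * φ).PosSemidef ↔
      ∃ ω : Matrix (Fin m2) (Fin m1) ℂ,
        ((1 : Matrix (Fin m1) (Fin m1) ℂ) - ωᴴ * ω).PosSemidef ∧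
          φ = ρl * ω * ρr - A22⁻¹ * A21 := by
  subst h12 hρl hρr
  rw [hA22pos.inv.posSemidef.sqrt_eq_cfcSqrt, ← hA22pos.posSemidef.inv_sqrt,
    hSchur.sqrt_eq_cfcSqrt]
  set L := CFC.sqrt (-A22)
  set ρr := CFC.sqrt (A11 - A21ᴴ * A22⁻¹ * A21)
  set ψ := φ + A22⁻¹ * A21
  have hLu : IsUnit L := CFC.isUnit_sqrt_iff_isStrictlyPositive.mpr hA22pos.isStrictlyPositive
  have hA22u : IsUnit A22.det := by
    simpa using (isUnit_iff_isUnit_det _).mp hA22pos.isUnit.neg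
  have hquad : A11 + A21ᴴ * φ + φᴴ * A21 + φᴴ * A22 * φ = ρrᴴ * ρr - (L * ψ)ᴴ * (L * ψ) := by
    rw [add_add_add_eq_sub_add A11 A21 (by simpa using hA22pos.isHermitian.neg) hA22u φ,
      sub_eq_add_neg (ρrᴴ * ρr)]
    congr 1
    · exact hSchur.conjTranspose_cfcSqrt_mul_cfcSqrt.symm
    · rw [conjTranspose_mul, Matrix.mul_assoc ψᴴ Lᴴ, ← Matrix.mul_assoc Lᴴ,
        hA22pos.posSemidef.conjTranspose_cfcSqrt_mul_cfcSqrt, Matrix.neg_mul, Matrix.mul_neg,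
        neg_neg, Matrix.mul_assoc]
  rw [hquad, (isHermitian_cfcSqrt _).posSemidef_conjTranspose_mul_self_sub_iff]
  refine exists_congr fun ω => and_congr_right' ?_
  rw [mul_add_eq_iff_eq_inv_mul_sub hLu, Matrix.mul_assoc L⁻¹]

/-- Matrix-ball description: `[I φ̂ᴴ] 𝔄 [I; φ̂] ≥ 0` holds iff
`φ̂ = ρ_l ω ρ_r - 𝔄₂₂⁻¹ 𝔄₂₁` for some non-expansive `ω`, where
`ρ_l = (-𝔄₂₂)^{-1/2}` and `ρ_r = (𝔄₁₁ - 𝔄₁₂ 𝔄₂₂⁻¹ 𝔄₂₁)^{1/2}`. -/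
theorem stmt_4 (m1 m2 : ℕ)
    (A11 : Matrix (Fin m1) (Fin m1) ℂ) (A12 : Matrix (Fin m1) (Fin m2) ℂ)
    (A21 : Matrix (Fin m2) (Fin m1) ℂ) (A22 : Matrix (Fin m2) (Fin m2) ℂ)
    (hA11 : A11.IsHermitian) (hA22 : A22.IsHermitian) (h12 : A12 = A21ᴴ)
    (hA22pos : (-A22).PosDef)
    (hSchur : (A11 - A12 * A22⁻¹ * A21).PosSemidef)
    (ρl : Matrix (Fin m2) (Fin m2) ℂ)
    (hρl : ρl = (hA22pos.inv.posSemidef).sqrt)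
    (ρr : Matrix (Fin m1) (Fin m1) ℂ)
    (hρr : ρr = hSchur.sqrt)
    (φ : Matrix (Fin m2) (Fin m1) ℂ) :
    (A11 + A12 * φ + φᴴ * A21 + φᴴ * A22 * φ).PosSemidef ↔
      ∃ ω : Matrix (Fin m2) (Fin m1) ℂ,
        ((1 : Matrix (Fin m1) (Fin m1) ℂ) - ωᴴ * ω).PosSemidef ∧
          φ = ρl * ω * ρr - A22⁻¹ * A21 :=
  stmt_4_general m1 m2 A11 A12 A21 A22 h12 hA22pos hSchur ρl hρl ρr hρr φ
end

section
/- Under the setting of the Dirac system u' = (izj + jV)u with u(0,z) = I_m, ‖v(x)‖ ≤ M and Im z > M, the block 𝔄22(x,z) of 𝔄(x,z) = u(x,z)* j u(x,z) satisfies -𝔄22(x,z) ≥ (1 + 2(Im z - M)x) I_{m2} for all x ≥ 0. -/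
open Matrix
open scoped ComplexOrder Matrix.Norms.L2Operator

/-!
Fix `η`, put `ξ = (0, η)`, `y(x) = u(x) ξ` and `f(x) = Re ⟨y, j y⟩ = ⟨𝔄(x) ξ, ξ⟩`.
Since `j² = 1`, `B = izj + jV` satisfies `B* j + j B = -2 Im z + 2V`, so
`f' = -2 Im z ‖y‖² + 2 Re ⟨y, V y⟩ ≤ -2(Im z - M) ‖y‖² ≤ 2(Im z - M) f`,
the last step because `f ≥ -‖y‖²`. Grönwall gives
`f(x) ≤ f(0) e^{2(Im z - M)x} = -‖η‖² e^{2(Im z - M)x} ≤ -(1 + 2(Im z - M)x) ‖η‖²`.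
-/

lemma le_mul_exp_of_hasDerivAt_le_mul {f f' : ℝ → ℝ} {K a b : ℝ}
    (hf : ∀ t, HasDerivAt f (f' t) t) (bound : ∀ t, f' t ≤ K * f t) (hab : a ≤ b) :
    f b ≤ f a * Real.exp (K * (b - a)) := by
  have := le_gronwallBound_of_liminf_deriv_right_le (f := f) (f' := f') (δ := f a) (K := K)
    (ε := 0) (a := a) (b := b) (fun t _ => (hf t).continuousAt.continuousWithinAt)
    (fun t _ _ hr => (hf t).hasDerivWithinAt.liminf_right_slope_le hr) le_rfl
    (fun t _ => by simpa using bound t) b ⟨hab, le_rfl⟩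
  rwa [gronwallBound_ε0] at this

namespace Matrix

section

variable {𝕜 : Type*} [RCLike 𝕜] {m n : Type*} [Fintype n]

lemma hasDerivAt_re_star_dotProduct_mulVec {y : ℝ → n → 𝕜} {A B : Matrix n n 𝕜} {t : ℝ}
    (hy : ∀ a, HasDerivAt (fun s => y s a) ((B *ᵥ y t) a) t) :
    HasDerivAt (fun s => RCLike.re (star (y s) ⬝ᵥ (A *ᵥ y s)))
      (RCLike.re (star (y t) ⬝ᵥ ((Bᴴ * A + A * B) *ᵥ y t))) t := by
  have hsum : HasDerivAt (fun s => ∑ a, ∑ b, star (y s a) * (A a b * y s b))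
      (∑ a, ∑ b, (star ((B *ᵥ y t) a) * (A a b * y t b) +
        star (y t a) * (A a b * (B *ᵥ y t) b))) t :=
    HasDerivAt.fun_sum fun a _ => HasDerivAt.fun_sum fun b _ =>
      (hy a).star.mul ((hy b).const_mul _)
  refine (RCLike.reCLM (K := 𝕜)).hasFDerivAt.comp_hasDerivAt t (hsum.congr_deriv ?_)
    |>.congr_of_eventuallyEq (Filter.Eventually.of_forall fun s => ?_)
  · rw [add_mulVec, dotProduct_add, ← mulVec_mulVec, ← mulVec_mulVec, dotProduct_mulVec,
      ← star_mulVec]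
    simp [dotProduct, mulVec, Finset.mul_sum, Finset.sum_add_distrib]
  · simp [dotProduct, mulVec, Finset.mul_sum]

lemma re_star_dotProduct_self (a : n → 𝕜) :
    RCLike.re (star a ⬝ᵥ a) = ‖WithLp.toLp 2 a‖ ^ 2 := by
  rw [← inner_self_eq_norm_sq (𝕜 := 𝕜), EuclideanSpace.inner_toLp_toLp, dotProduct_comm]

variable [Fintype m]

lemma hasDerivAt_mulVec_apply {u : ℝ → Matrix m n 𝕜} {B : Matrix m m 𝕜} {t : ℝ}
    (hu : ∀ a b, HasDerivAt (fun s => u s a b) ((B * u t) a b) t) (ξ : n → 𝕜) (a : m) :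
    HasDerivAt (fun s => (u s *ᵥ ξ) a) ((B *ᵥ (u t *ᵥ ξ)) a) t := by
  rw [mulVec_mulVec]
  simp only [mulVec, dotProduct]
  exact HasDerivAt.fun_sum fun b _ => (hu a b).mul_const (ξ b)

lemma two_mul_re_star_dotProduct_mulVec_le [DecidableEq n] {M : ℝ} (A : Matrix m n 𝕜)
    (hA : ‖A‖ ≤ M) (a : m → 𝕜) (b : n → 𝕜) :
    2 * RCLike.re (star a ⬝ᵥ (A *ᵥ b)) ≤
      M * (RCLike.re (star a ⬝ᵥ a) + RCLike.re (star b ⬝ᵥ b)) := by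
  rw [re_star_dotProduct_self, re_star_dotProduct_self]
  set a' := WithLp.toLp 2 a
  set b' := WithLp.toLp 2 b
  have hAb : ‖WithLp.toLp 2 (A *ᵥ b)‖ ≤ M * ‖b'‖ :=
    (A.l2_opNorm_mulVec b').trans (mul_le_mul_of_nonneg_right hA (norm_nonneg _))
  have hCS : RCLike.re (star a ⬝ᵥ (A *ᵥ b)) ≤ ‖a'‖ * ‖WithLp.toLp 2 (A *ᵥ b)‖ := by
    rw [dotProduct_comm, ← EuclideanSpace.inner_toLp_toLp]
    exact re_inner_le_norm _ _
  have hM : 0 ≤ M := (norm_nonneg A).trans hA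
  nlinarith [two_mul_le_add_sq ‖a'‖ ‖b'‖, mul_le_mul_of_nonneg_left hAb (norm_nonneg a')]

lemma star_dotProduct_self_sum (y : m ⊕ n → 𝕜) :
    star y ⬝ᵥ y =
      star (y ∘ Sum.inl) ⬝ᵥ (y ∘ Sum.inl) + star (y ∘ Sum.inr) ⬝ᵥ (y ∘ Sum.inr) := by
  simp [dotProduct, Fintype.sum_sum_type]

lemma star_dotProduct_fromBlocks_mulVec (A : Matrix m m 𝕜) (B : Matrix m n 𝕜)
    (C : Matrix n m 𝕜) (D : Matrix n n 𝕜) (y : m ⊕ n → 𝕜) :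
    star y ⬝ᵥ (fromBlocks A B C D *ᵥ y) =
      star (y ∘ Sum.inl) ⬝ᵥ (A *ᵥ (y ∘ Sum.inl)) + star (y ∘ Sum.inl) ⬝ᵥ (B *ᵥ (y ∘ Sum.inr)) +
      (star (y ∘ Sum.inr) ⬝ᵥ (C *ᵥ (y ∘ Sum.inl)) +
        star (y ∘ Sum.inr) ⬝ᵥ (D *ᵥ (y ∘ Sum.inr))) := by
  simp [dotProduct, Fintype.sum_sum_type, fromBlocks_mulVec, mul_add, Finset.sum_add_distrib]

lemma re_star_dotProduct_fromBlocks_zero_mulVec_le [DecidableEq n] {M : ℝ} (w : Matrix m n 𝕜)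
    (hw : ‖w‖ ≤ M) (y : m ⊕ n → 𝕜) :
    RCLike.re (star y ⬝ᵥ (fromBlocks 0 w wᴴ 0 *ᵥ y)) ≤ M * RCLike.re (star y ⬝ᵥ y) := by
  have hconj : star (y ∘ Sum.inr) ⬝ᵥ (wᴴ *ᵥ (y ∘ Sum.inl)) =
      star (star (y ∘ Sum.inl) ⬝ᵥ (w *ᵥ (y ∘ Sum.inr))) := by
    rw [dotProduct_mulVec, ← star_mulVec, star_dotProduct]
  rw [star_dotProduct_fromBlocks_mulVec, hconj, star_dotProduct_self_sum]
  simpa [two_mul] using two_mul_re_star_dotProduct_mulVec_le w hw (y ∘ Sum.inl) (y ∘ Sum.inr)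

lemma star_dotProduct_fromBlocks_one_neg_one_mulVec [DecidableEq m] [DecidableEq n]
    (y : m ⊕ n → 𝕜) :
    star y ⬝ᵥ (fromBlocks 1 0 0 (-1) *ᵥ y) =
      star (y ∘ Sum.inl) ⬝ᵥ (y ∘ Sum.inl) - star (y ∘ Sum.inr) ⬝ᵥ (y ∘ Sum.inr) := by
  simp [star_dotProduct_fromBlocks_mulVec, sub_eq_add_neg, neg_mulVec]

lemma neg_re_star_dotProduct_self_le_fromBlocks_one_neg_one [DecidableEq m] [DecidableEq n]
    (y : m ⊕ n → 𝕜) :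
    -RCLike.re (star y ⬝ᵥ y) ≤ RCLike.re (star y ⬝ᵥ (fromBlocks 1 0 0 (-1) *ᵥ y)) := by
  rw [star_dotProduct_fromBlocks_one_neg_one_mulVec, star_dotProduct_self_sum]
  have := (RCLike.nonneg_iff.mp (dotProduct_star_self_nonneg (y ∘ Sum.inl))).1
  simp only [map_add, map_sub]
  linarith

lemma star_dotProduct_toBlocks₂₂_mulVec (A : Matrix (m ⊕ n) (m ⊕ n) 𝕜) (η : n → 𝕜) :
    star η ⬝ᵥ (A.toBlocks₂₂ *ᵥ η) = star (Sum.elim 0 η) ⬝ᵥ (A *ᵥ Sum.elim 0 η) := by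
  simp [dotProduct, mulVec, Fintype.sum_sum_type, toBlocks₂₂]

lemma posSemidef_neg_toBlocks₂₂_sub_smul_one [DecidableEq n] {A : Matrix (m ⊕ n) (m ⊕ n) 𝕜}
    (hA : A.IsHermitian) (r : ℝ)
    (h : ∀ η : n → 𝕜, r * RCLike.re (star η ⬝ᵥ η) ≤
      -RCLike.re (star (Sum.elim 0 η) ⬝ᵥ (A *ᵥ Sum.elim 0 η))) :
    (-A.toBlocks₂₂ - (r : 𝕜) • (1 : Matrix n n 𝕜)).PosSemidef := by
  have hherm : (-A.toBlocks₂₂ - (r : 𝕜) • (1 : Matrix n n 𝕜)).IsHermitian :=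
    (hA.submatrix Sum.inr).neg.sub (isHermitian_one.smul (RCLike.conj_ofReal r))
  refine PosSemidef.of_dotProduct_mulVec_nonneg hherm fun η => ?_
  refine RCLike.nonneg_iff.mpr ⟨?_, hherm.im_star_dotProduct_mulVec_self η⟩
  simp only [sub_mulVec, neg_mulVec, smul_mulVec, one_mulVec, dotProduct_sub, dotProduct_neg,
    dotProduct_smul, star_dotProduct_toBlocks₂₂_mulVec, smul_eq_mul, map_sub, map_neg,
    RCLike.mul_re, RCLike.ofReal_re, RCLike.ofReal_im, zero_mul, sub_zero]
  linarith [h η]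

end

section

variable {m n : Type*} [Fintype m] [Fintype n] [DecidableEq m] [DecidableEq n]

lemma dirac_conjTranspose_mul_add_mul {ι : Type*} [Fintype ι] [DecidableEq ι] (z : ℂ)
    {J H : Matrix ι ι ℂ} (hJ : Jᴴ = J) (hJJ : J * J = 1) (hH : Hᴴ = H) :
    ((Complex.I * z) • J + J * H)ᴴ * J + J * ((Complex.I * z) • J + J * H) =
      ((-2 * z.im : ℝ) : ℂ) • 1 + (2 : ℂ) • H := by
  have hre : star (Complex.I * z) + Complex.I * z = ((-2 * z.im : ℝ) : ℂ) := by
    apply Complex.ext <;> simp; ring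
  rw [conjTranspose_add, conjTranspose_smul, conjTranspose_mul, hJ, hH, add_mul, mul_add,
    smul_mul, mul_smul_comm, mul_assoc, ← mul_assoc J J H, hJJ, ← hre, add_smul]
  simp only [mul_one, one_mul, two_smul]
  abel

lemma re_star_dotProduct_dirac_le {M : ℝ} (w : Matrix m n ℂ) (hw : ‖w‖ ≤ M) {z : ℂ}
    (hz : M ≤ z.im) (y : m ⊕ n → ℂ) :
    let J : Matrix (m ⊕ n) (m ⊕ n) ℂ := fromBlocks 1 0 0 (-1)
    let B := (Complex.I * z) • J + J * fromBlocks 0 w wᴴ 0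
    (star y ⬝ᵥ ((Bᴴ * J + J * B) *ᵥ y)).re ≤ 2 * (z.im - M) * (star y ⬝ᵥ (J *ᵥ y)).re := by
  intro J B
  have hJ : Jᴴ = J := by simp [J, fromBlocks_conjTranspose]
  have hJJ : J * J = 1 := by simp [J, fromBlocks_multiply, ← fromBlocks_one]
  have hH : (fromBlocks 0 w wᴴ 0 : Matrix (m ⊕ n) (m ⊕ n) ℂ)ᴴ = fromBlocks 0 w wᴴ 0 := by
    simp [fromBlocks_conjTranspose]
  have hV := re_star_dotProduct_fromBlocks_zero_mulVec_le w hw y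
  have hJy := neg_re_star_dotProduct_self_le_fromBlocks_one_neg_one (𝕜 := ℂ) y
  simp only [B, dirac_conjTranspose_mul_add_mul z hJ hJJ hH, add_mulVec, smul_mulVec, one_mulVec,
    dotProduct_add, dotProduct_smul, smul_eq_mul, Complex.add_re, Complex.mul_re,
    Complex.re_ofNat, Complex.im_ofNat, Complex.ofReal_re, Complex.ofReal_im, zero_mul, sub_zero,
    RCLike.re_to_complex, J] at hV hJy ⊢
  nlinarith [mul_le_mul_of_nonneg_left hJy (sub_nonneg.mpr hz)]

end

end Matrix

theorem stmt_6_general (m1 m2 : ℕ) (M : ℝ)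
    (v : ℝ → Matrix (Fin m1) (Fin m2) ℂ)
    (hvM : ∀ x, ‖v x‖ ≤ M)
    (j : Matrix (Fin m1 ⊕ Fin m2) (Fin m1 ⊕ Fin m2) ℂ)
    (hj : j = Matrix.fromBlocks 1 0 0 (-1))
    (V : ℝ → Matrix (Fin m1 ⊕ Fin m2) (Fin m1 ⊕ Fin m2) ℂ)
    (hV : ∀ x, V x = Matrix.fromBlocks 0 (v x) (v x)ᴴ 0)
    (z : ℂ) (hz : M < z.im)
    (u : ℝ → Matrix (Fin m1 ⊕ Fin m2) (Fin m1 ⊕ Fin m2) ℂ)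
    (hu0 : u 0 = 1)
    (hu : ∀ x a b, HasDerivAt (fun s => u s a b)
      ((((Complex.I * z) • j + j * V x) * u x) a b) x)
    (𝔄 : ℝ → Matrix (Fin m1 ⊕ Fin m2) (Fin m1 ⊕ Fin m2) ℂ)
    (h𝔄 : ∀ x, 𝔄 x = (u x)ᴴ * j * u x) :
    ∀ x, 0 ≤ x →
      ((-(𝔄 x).toBlocks₂₂) -
        (((1 + 2 * (z.im - M) * x : ℝ) : ℂ)) • (1 : Matrix (Fin m2) (Fin m2) ℂ)).PosSemidef := by
  intro x hx
  subst hj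
  obtain rfl : V = fun t => fromBlocks 0 (v t) (v t)ᴴ 0 := funext hV
  have h𝔄x : (𝔄 x).IsHermitian := by
    rw [h𝔄]
    exact isHermitian_conjTranspose_mul_mul _ (by simp [IsHermitian, fromBlocks_conjTranspose])
  refine posSemidef_neg_toBlocks₂₂_sub_smul_one h𝔄x (1 + 2 * (z.im - M) * x) fun η => ?_
  set ξ : Fin m1 ⊕ Fin m2 → ℂ := Sum.elim 0 η
  set f : ℝ → ℝ := fun t => (star (u t *ᵥ ξ) ⬝ᵥ (fromBlocks 1 0 0 (-1) *ᵥ (u t *ᵥ ξ))).re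
  have hf := fun t => hasDerivAt_re_star_dotProduct_mulVec
    (A := fromBlocks 1 0 0 (-1)) (hasDerivAt_mulVec_apply (hu t) ξ)
  have hgronwall := le_mul_exp_of_hasDerivAt_le_mul (f := f) hf
    (fun t => re_star_dotProduct_dirac_le (v t) (hvM t) hz.le _) hx
  have hf0 : f 0 = -(star η ⬝ᵥ η).re := by
    simp [f, hu0, ξ, star_dotProduct_fromBlocks_one_neg_one_mulVec]
  have hfx : (star ξ ⬝ᵥ (𝔄 x *ᵥ ξ)).re = f x := by
    rw [h𝔄, ← mulVec_mulVec, ← mulVec_mulVec, dotProduct_mulVec, ← star_mulVec]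
  have hη : 0 ≤ (star η ⬝ᵥ η).re := (RCLike.nonneg_iff.mp (dotProduct_star_self_nonneg η)).1
  rw [hf0, sub_zero] at hgronwall
  rw [RCLike.re_to_complex, RCLike.re_to_complex, hfx]
  nlinarith [Real.add_one_le_exp (2 * (z.im - M) * x)]

/-- For the Dirac system `u' = (izj + jV)u`, `u(0,z) = I`, with `‖v(x)‖ ≤ M` and
`Im z > M`, the lower-right block of `𝔄(x) = u(x)ᴴ j u(x)` satisfies
`-𝔄₂₂(x) ≥ (1 + 2(Im z - M)x) I` for all `x ≥ 0`. -/
theorem stmt_6 (m1 m2 : ℕ) (M : ℝ)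
    (v : ℝ → Matrix (Fin m1) (Fin m2) ℂ) (hv : Continuous v)
    (hvM : ∀ x, ‖v x‖ ≤ M)
    (j : Matrix (Fin m1 ⊕ Fin m2) (Fin m1 ⊕ Fin m2) ℂ)
    (hj : j = Matrix.fromBlocks 1 0 0 (-1))
    (V : ℝ → Matrix (Fin m1 ⊕ Fin m2) (Fin m1 ⊕ Fin m2) ℂ)
    (hV : ∀ x, V x = Matrix.fromBlocks 0 (v x) (v x)ᴴ 0)
    (z : ℂ) (hz : M < z.im)
    (u : ℝ → Matrix (Fin m1 ⊕ Fin m2) (Fin m1 ⊕ Fin m2) ℂ)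
    (hu0 : u 0 = 1)
    (hu : ∀ x a b, HasDerivAt (fun s => u s a b)
      ((((Complex.I * z) • j + j * V x) * u x) a b) x)
    (𝔄 : ℝ → Matrix (Fin m1 ⊕ Fin m2) (Fin m1 ⊕ Fin m2) ℂ)
    (h𝔄 : ∀ x, 𝔄 x = (u x)ᴴ * j * u x) :
    ∀ x, 0 ≤ x →
      ((-(𝔄 x).toBlocks₂₂) -
        (((1 + 2 * (z.im - M) * x : ℝ) : ℂ)) • (1 : Matrix (Fin m2) (Fin m2) ℂ)).PosSemidef :=
  stmt_6_general m1 m2 M v hvM j hj V hV z hz u hu0 hu 𝔄 h𝔄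
end

section
/- Let A = -i ∫₀ˣ · dt on L²_{m2}(0,l) and let Π = [Φ₁ Φ₂] : ℂ^{m1+m2} → L²_{m2}(0,l), where (Φ₁g)(x) = Φ₁(x)g for a bounded measurable m2×m1 matrix function Φ₁, and Φ₂g ≡ g. If S ∈ B(L²_{m2}(0,l)) is a bounded, self-adjoint, strictly positive, invertible operator satisfying AS - SA* = -i Π Π*, then the closed linear span of the images Im((A*)^i S⁻¹ Π), i = 0, 1, 2, ..., is all of L²_{m2}(0,l). -/
/-!
Conjugating the operator identity by `S⁻¹` gives `S⁻¹A = A*S⁻¹ - i S⁻¹ΠΠ*S⁻¹`, so by induction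
`S⁻¹AⁱΠ` maps into the span of the `(A*)ʲS⁻¹Π`. Since `S⁻¹` is onto, it suffices that the
`AⁱΠ` have dense span. Already on constants `Aⁱ` produces `(-i)ⁱ xⁱ/i!` times the constant, so a
function orthogonal to all of them has vanishing moments, and by Weierstrass approximation it
vanishes.
-/

open MeasureTheory ContinuousLinearMap Set Filter Topology
open scoped Polynomial Nat

section Intertwining

variable {R M N : Type*} [Ring R] [TopologicalSpace M] [AddCommGroup M] [Module R M]
  [IsTopologicalAddGroup M] [TopologicalSpace N] [AddCommGroup N] [Module R N]
  {A B S T : M →L[R] M} {P : N →L[R] M} {K : M →L[R] N}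

theorem apply_mem_iSup_range_pow_comp (v : M)
    (hv : v ∈ ⨆ j, LinearMap.range ((B ^ j).comp (T.comp P) : N →ₗ[R] M)) :
    B v ∈ ⨆ j, LinearMap.range ((B ^ j).comp (T.comp P) : N →ₗ[R] M) := by
  induction hv using Submodule.iSup_induction' with
  | mem i x hx =>
    obtain ⟨g, rfl⟩ := hx
    refine Submodule.mem_iSup_of_mem (i + 1) ⟨g, ?_⟩
    simp [pow_succ']
  | zero => simp
  | add x y _ _ hx hy => rw [map_add]; exact add_mem hx hy

theorem inverse_apply_pow_mem_iSup_range_pow_comp (hST : S.comp T = .id R M)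
    (hTS : T.comp S = .id R M) (hAS : A.comp S - S.comp B = P.comp K) (i : ℕ) (g : N) :
    T ((A ^ i) (P g)) ∈ ⨆ j, LinearMap.range ((B ^ j).comp (T.comp P) : N →ₗ[R] M) := by
  have hS : ∀ u, S (T u) = u := fun u => congr($hST u)
  have hT : ∀ u, T (S u) = u := fun u => congr($hTS u)
  have hexchange : ∀ u, T (A u) = B (T u) + T (P (K (T u))) := by
    intro u
    have h := congr(T ($hAS (T u)))
    simp only [sub_apply, comp_apply, map_sub, hS, hT] at h
    exact sub_eq_iff_eq_add'.1 h
  have hbase : ∀ g, T (P g) ∈ ⨆ j, LinearMap.range ((B ^ j).comp (T.comp P) : N →ₗ[R] M) :=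
    fun g => Submodule.mem_iSup_of_mem 0 ⟨g, by simp⟩
  induction i generalizing g with
  | zero => simpa using hbase g
  | succ i ih =>
    rw [pow_succ', mul_apply_eq_comp, hexchange]
    exact add_mem (apply_mem_iSup_range_pow_comp _ (ih g)) (hbase _)

theorem topologicalClosure_iSup_range_pow_comp_eq_top [ContinuousConstSMul R M]
    (hST : S.comp T = .id R M) (hTS : T.comp S = .id R M) (hAS : A.comp S - S.comp B = P.comp K)
    (hdense : (⨆ i, LinearMap.range ((A ^ i).comp P : N →ₗ[R] M)).topologicalClosure = ⊤) :
    (⨆ i, LinearMap.range ((B ^ i).comp (T.comp P) : N →ₗ[R] M)).topologicalClosure = ⊤ := by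
  have hmap : (⨆ i, LinearMap.range ((A ^ i).comp P : N →ₗ[R] M)).map (T : M →ₗ[R] M) ≤
      ⨆ i, LinearMap.range ((B ^ i).comp (T.comp P) : N →ₗ[R] M) := by
    rw [Submodule.map_iSup, iSup_le_iff]
    rintro i _ ⟨_, ⟨g, rfl⟩, rfl⟩
    exact inverse_apply_pow_mem_iSup_range_pow_comp hST hTS hAS i g
  have hT : DenseRange T := Function.Surjective.denseRange fun u => ⟨S u, congr($hTS u)⟩
  rw [← Submodule.dense_iff_topologicalClosure_eq_top] at hdense ⊢
  exact (hT.dense_image T.continuous hdense).mono hmap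

end Intertwining

section Moments

variable {F : Type*} [NormedAddCommGroup F] [NormedSpace ℝ F] {a b : ℝ} {f : ℝ → F}

theorem MeasureTheory.IntegrableOn.continuousOn_smul_Ioo (hf : IntegrableOn f (Ioo a b))
    {g : ℝ → ℝ} (hg : ContinuousOn g (Icc a b)) : IntegrableOn (fun x => g x • f x) (Ioo a b) :=
  hf.continuousOn_smul_of_subset hg isCompact_Icc measurableSet_Ioo Ioo_subset_Icc_self

theorem setIntegral_polynomial_eval_smul_eq_zero (hf : IntegrableOn f (Ioo a b))
    (hmom : ∀ n : ℕ, ∫ x in Ioo a b, x ^ n • f x = 0) (p : ℝ[X]) :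
    ∫ x in Ioo a b, p.eval x • f x = 0 := by
  induction p using Polynomial.induction_on' with
  | add p q hp hq =>
    simp only [Polynomial.eval_add, add_smul]
    rw [integral_add (hf.continuousOn_smul_Ioo p.continuous.continuousOn)
      (hf.continuousOn_smul_Ioo q.continuous.continuousOn), hp, hq, add_zero]
  | monomial n c =>
    simp only [Polynomial.eval_monomial, mul_smul]
    rw [integral_smul, hmom, smul_zero]

theorem setIntegral_continuousOn_smul_eq_zero (hf : IntegrableOn f (Ioo a b))
    (hmom : ∀ n : ℕ, ∫ x in Ioo a b, x ^ n • f x = 0) {g : ℝ → ℝ}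
    (hg : ContinuousOn g (Icc a b)) : ∫ x in Ioo a b, g x • f x = 0 := by
  have hbound : ∀ ε > 0, ‖∫ x in Ioo a b, g x • f x‖ ≤ ε * ∫ x in Ioo a b, ‖f x‖ := by
    intro ε hε
    obtain ⟨p, hp⟩ := exists_polynomial_near_of_continuousOn a b g hg ε hε
    calc ‖∫ x in Ioo a b, g x • f x‖ = ‖∫ x in Ioo a b, (g x - p.eval x) • f x‖ := by
          simp_rw [sub_smul]
          rw [integral_sub (hf.continuousOn_smul_Ioo hg)
            (hf.continuousOn_smul_Ioo p.continuous.continuousOn),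
            setIntegral_polynomial_eval_smul_eq_zero hf hmom, sub_zero]
      _ ≤ ∫ x in Ioo a b, ε * ‖f x‖ := by
          refine norm_integral_le_of_norm_le (hf.norm.const_mul ε)
            (ae_restrict_of_forall_mem measurableSet_Ioo fun x hx => ?_)
          rw [norm_smul, Real.norm_eq_abs, abs_sub_comm]
          exact mul_le_mul_of_nonneg_right (hp x (Ioo_subset_Icc_self hx)).le (norm_nonneg _)
      _ = ε * ∫ x in Ioo a b, ‖f x‖ := integral_const_mul ε _
  refine norm_le_zero_iff.1
    (ge_of_tendsto (x := 𝓝[>] (0 : ℝ)) ?_ (eventually_nhdsWithin_of_forall hbound))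
  simpa using tendsto_nhdsWithin_of_tendsto_nhds
    ((tendsto_id (x := 𝓝 (0 : ℝ))).mul_const (∫ x in Ioo a b, ‖f x‖))

theorem ae_eq_zero_of_forall_setIntegral_pow_smul_eq_zero [CompleteSpace F]
    (hf : IntegrableOn f (Ioo a b)) (hmom : ∀ n : ℕ, ∫ x in Ioo a b, x ^ n • f x = 0) :
    f =ᵐ[volume.restrict (Ioo a b)] 0 := by
  refine (ae_restrict_iff' measurableSet_Ioo).2
    (isOpen_Ioo.ae_eq_zero_of_integral_contDiff_smul_eq_zero hf.locallyIntegrableOn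
      fun g hg _ hsupp => ?_)
  rw [← setIntegral_eq_integral_of_forall_compl_eq_zero fun x hx => ?_]
  · exact setIntegral_continuousOn_smul_eq_zero hf hmom hg.continuous.continuousOn
  · rw [image_eq_zero_of_notMem_tsupport (fun h => hx (hsupp h)), zero_smul]

end Moments

section Volterra

variable {E : Type*} [NormedAddCommGroup E] [NormedSpace ℂ E] [CompleteSpace E] {l : ℝ}
  {A : Lp E 2 (volume.restrict (Ioo 0 l)) →L[ℂ] Lp E 2 (volume.restrict (Ioo 0 l))}

variable (A) in
def IsVolterraOperator : Prop :=
  ∀ f : Lp E 2 (volume.restrict (Ioo 0 l)), ∀ᵐ x ∂volume.restrict (Ioo 0 l),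
    (A f : ℝ → E) x = (-Complex.I) • ∫ t in Ioc (0 : ℝ) x, (f : ℝ → E) t

theorem volterra_apply_ae_eq_monomial
    (hA : IsVolterraOperator A)
    {f : Lp E 2 (volume.restrict (Ioo 0 l))} {n : ℕ} {v : E}
    (hf : (f : ℝ → E) =ᵐ[volume.restrict (Ioo 0 l)] fun x => (x ^ n / n ! : ℝ) • v) :
    (A f : ℝ → E) =ᵐ[volume.restrict (Ioo 0 l)]
      fun x => (x ^ (n + 1) / (n + 1)! : ℝ) • (-Complex.I • v) := by
  have hf' := (ae_restrict_iff' measurableSet_Ioo).1 hf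
  filter_upwards [hA f, ae_restrict_mem measurableSet_Ioo] with x hx hxl
  have hint : ∫ t in Ioc 0 x, (f : ℝ → E) t = ∫ t in Ioc 0 x, (t ^ n / n ! : ℝ) • v :=
    setIntegral_congr_ae measurableSet_Ioc
      (hf'.mono fun t ht htx => ht ⟨htx.1, htx.2.trans_lt hxl.2⟩)
  rw [hx, hint, integral_smul_const, ← intervalIntegral.integral_of_le hxl.1.le,
    intervalIntegral.integral_div, integral_pow, smul_comm]
  congr 1
  rw [Nat.factorial_succ, zero_pow n.succ_ne_zero, sub_zero]
  push_cast
  field_simp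

theorem volterra_pow_apply_ae_eq_monomial
    (hA : IsVolterraOperator A)
    {f : Lp E 2 (volume.restrict (Ioo 0 l))} {v : E}
    (hf : (f : ℝ → E) =ᵐ[volume.restrict (Ioo 0 l)] fun _ => v) (n : ℕ) :
    ((A ^ n) f : ℝ → E) =ᵐ[volume.restrict (Ioo 0 l)]
      fun x => (x ^ n / n ! : ℝ) • ((-Complex.I) ^ n • v) := by
  induction n with
  | zero => simpa using hf
  | succ n ih =>
    rw [pow_succ', mul_apply_eq_comp]
    refine (volterra_apply_ae_eq_monomial hA ih).trans (Eventually.of_forall fun x => ?_)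
    simp only [pow_succ', mul_smul]

end Volterra

section VolterraDensity

variable {E : Type*} [NormedAddCommGroup E] [InnerProductSpace ℂ E] [CompleteSpace E] {l : ℝ}
  {A : Lp E 2 (volume.restrict (Ioo 0 l)) →L[ℂ] Lp E 2 (volume.restrict (Ioo 0 l))}

theorem topologicalClosure_iSup_range_volterra_pow_comp_eq_top
    (hA : IsVolterraOperator A)
    {G : Type*} [TopologicalSpace G] [AddCommGroup G] [Module ℂ G]
    {P : G →L[ℂ] Lp E 2 (volume.restrict (Ioo 0 l))}
    (hP : ∀ v : E, ∃ g, (P g : ℝ → E) =ᵐ[volume.restrict (Ioo 0 l)] fun _ => v) :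
    (⨆ i, LinearMap.range ((A ^ i).comp P :
      G →ₗ[ℂ] Lp E 2 (volume.restrict (Ioo 0 l)))).topologicalClosure = ⊤ := by
  set W := ⨆ i, LinearMap.range ((A ^ i).comp P : G →ₗ[ℂ] Lp E 2 (volume.restrict (Ioo 0 l)))
  rw [Submodule.topologicalClosure_eq_top_iff, Submodule.eq_bot_iff]
  intro h hh
  have hmonomial : ∀ (n : ℕ) (v : E), ∃ f ∈ W,
      (f : ℝ → E) =ᵐ[volume.restrict (Ioo 0 l)] fun x => (x ^ n / n ! : ℝ) • v := by
    intro n v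
    obtain ⟨g, hg⟩ := hP (Complex.I ^ n • v)
    refine ⟨(A ^ n) (P g), Submodule.mem_iSup_of_mem n ⟨g, rfl⟩,
      (volterra_pow_apply_ae_eq_monomial hA hg n).trans (Eventually.of_forall fun x => ?_)⟩
    simp [smul_smul, ← mul_pow]
  have hint : IntegrableOn (h : ℝ → E) (Ioo 0 l) := (Lp.memLp h).integrable one_le_two
  have hmom : ∀ n : ℕ, ∫ x in Ioo 0 l, x ^ n • (h : ℝ → E) x = 0 := by
    intro n
    have hscaled : ∫ x in Ioo 0 l, (x ^ n / n ! : ℝ) • (h : ℝ → E) x = 0 := by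
      refine integral_eq_zero_of_forall_integral_inner_eq_zero ℂ _
        (hint.continuousOn_smul_Ioo (by fun_prop)) fun v => ?_
      obtain ⟨f, hfW, hf⟩ := hmonomial n v
      rw [← (Submodule.mem_orthogonal _ _).1 hh f hfW, L2.inner_def]
      refine integral_congr_ae (hf.mono fun x hx => ?_)
      simp only [hx, ← Complex.coe_smul, inner_smul_left, inner_smul_right, Complex.conj_ofReal]
    simp_rw [div_eq_inv_mul, mul_smul] at hscaled
    rwa [integral_smul, smul_eq_zero_iff_right (by positivity)] at hscaled
  exact Lp.ext ((ae_eq_zero_of_forall_setIntegral_pow_smul_eq_zero hint hmom).trans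
    (Lp.coeFn_zero E 2 _).symm)

end VolterraDensity

theorem stmt_11_general (m1 m2 : ℕ) (l : ℝ)
    (μ : Measure ℝ) (hμ : μ = volume.restrict (Set.Ioo 0 l))
    (A : Lp (EuclideanSpace ℂ (Fin m2)) 2 μ →L[ℂ] Lp (EuclideanSpace ℂ (Fin m2)) 2 μ)
    (hA : ∀ f : Lp (EuclideanSpace ℂ (Fin m2)) 2 μ,
      ∀ᵐ x ∂μ, (A f : ℝ → EuclideanSpace ℂ (Fin m2)) x =
        (-Complex.I) • ∫ t in Set.Ioc (0:ℝ) x, (f : ℝ → EuclideanSpace ℂ (Fin m2)) t)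
    (Φ₁mat : ℝ → Matrix (Fin m2) (Fin m1) ℂ)
    (Pi0 : EuclideanSpace ℂ (Fin m1 ⊕ Fin m2) →L[ℂ] Lp (EuclideanSpace ℂ (Fin m2)) 2 μ)
    (hPi0 : ∀ g : EuclideanSpace ℂ (Fin m1 ⊕ Fin m2),
      ∀ᵐ x ∂μ, (Pi0 g : ℝ → EuclideanSpace ℂ (Fin m2)) x =
        (fun k => (Φ₁mat x).mulVec (fun i => g (Sum.inl i)) k + g (Sum.inr k)))
    (S Sinv : Lp (EuclideanSpace ℂ (Fin m2)) 2 μ →L[ℂ] Lp (EuclideanSpace ℂ (Fin m2)) 2 μ)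
    (hSinv1 : S.comp Sinv = ContinuousLinearMap.id ℂ _)
    (hSinv2 : Sinv.comp S = ContinuousLinearMap.id ℂ _)
    (hid : A.comp S - S.comp (adjoint A) = (-Complex.I) • (Pi0.comp (adjoint Pi0))) :
    (⨆ i : ℕ, LinearMap.range ((((adjoint A) ^ i).comp (Sinv.comp Pi0)) :
        EuclideanSpace ℂ (Fin m1 ⊕ Fin m2) →ₗ[ℂ] Lp (EuclideanSpace ℂ (Fin m2)) 2 μ)).topologicalClosure
      = ⊤ := by
  subst hμ
  refine topologicalClosure_iSup_range_pow_comp_eq_top (K := (-Complex.I) • adjoint Pi0)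
    hSinv1 hSinv2 (by rw [hid, comp_smul]) ?_
  refine topologicalClosure_iSup_range_volterra_pow_comp_eq_top hA
    fun v => ⟨WithLp.toLp 2 (Sum.elim 0 v.ofLp), ?_⟩
  filter_upwards [hPi0 (WithLp.toLp 2 (Sum.elim 0 v.ofLp))] with x hx
  ext k
  simpa [← Pi.zero_def] using congrFun hx k

/-- If `S > 0` is bounded, self-adjoint and invertible with
`AS - SA* = -iΠΠ*`, where `A` is the Volterra operator and `Π = [Φ₁ Φ₂]`,
then the closed span of the images `Im((A*)^i S⁻¹ Π)`, `i ≥ 0`, is all of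
`L²((0,l); ℂ^{m2})`. -/
theorem stmt_11 (m1 m2 : ℕ) (l : ℝ) (hl : 0 < l)
    (μ : Measure ℝ) (hμ : μ = volume.restrict (Set.Ioo 0 l))
    (A : Lp (EuclideanSpace ℂ (Fin m2)) 2 μ →L[ℂ] Lp (EuclideanSpace ℂ (Fin m2)) 2 μ)
    (hA : ∀ f : Lp (EuclideanSpace ℂ (Fin m2)) 2 μ,
      ∀ᵐ x ∂μ, (A f : ℝ → EuclideanSpace ℂ (Fin m2)) x =
        (-Complex.I) • ∫ t in Set.Ioc (0:ℝ) x, (f : ℝ → EuclideanSpace ℂ (Fin m2)) t)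
    (Φ₁mat : ℝ → Matrix (Fin m2) (Fin m1) ℂ)
    (hΦ₁meas : ∀ k i, Measurable fun x => Φ₁mat x k i) (C : ℝ) (hΦ₁bd : ∀ x, ∀ k i, ‖Φ₁mat x k i‖ ≤ C)
    (Pi0 : EuclideanSpace ℂ (Fin m1 ⊕ Fin m2) →L[ℂ] Lp (EuclideanSpace ℂ (Fin m2)) 2 μ)
    (hPi0 : ∀ g : EuclideanSpace ℂ (Fin m1 ⊕ Fin m2),
      ∀ᵐ x ∂μ, (Pi0 g : ℝ → EuclideanSpace ℂ (Fin m2)) x =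
        (fun k => (Φ₁mat x).mulVec (fun i => g (Sum.inl i)) k + g (Sum.inr k)))
    (S Sinv : Lp (EuclideanSpace ℂ (Fin m2)) 2 μ →L[ℂ] Lp (EuclideanSpace ℂ (Fin m2)) 2 μ)
    (hSsa : IsSelfAdjoint S)
    (hSpos : ∀ f, f ≠ 0 → 0 < (inner ℂ (S f) f : ℂ).re)
    (hSinv1 : S.comp Sinv = ContinuousLinearMap.id ℂ _)
    (hSinv2 : Sinv.comp S = ContinuousLinearMap.id ℂ _)
    (hid : A.comp S - S.comp (adjoint A) = (-Complex.I) • (Pi0.comp (adjoint Pi0))) :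
    (⨆ i : ℕ, LinearMap.range ((((adjoint A) ^ i).comp (Sinv.comp Pi0)) :
        EuclideanSpace ℂ (Fin m1 ⊕ Fin m2) →ₗ[ℂ] Lp (EuclideanSpace ℂ (Fin m2)) 2 μ)).topologicalClosure
      = ⊤ :=
  stmt_11_general m1 m2 l μ hμ A hA Φ₁mat Pi0 hPi0 S Sinv hSinv1 hSinv2 hid
end

section
/- Let A, S, Π satisfy the operator identity AS - SA* = -iΠΠ* on a Hilbert space H, with Π : ℂ^m → H bounded, S bounded, self-adjoint, positive and boundedly invertible, and A bounded. Define w_A(z) = I_m - iz Π* S⁻¹ (I - zA)⁻¹ Π for z with 1/z in the resolvent set of A. Then w_A(z)* w_A(z) = I_m + i(z̄ - z) Π* (I - z̄A*)⁻¹ S⁻¹ (I - zA)⁻¹ Π. -/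
/-!
Conjugating the node identity by `S⁻¹` gives `S⁻¹ΠΠ*S⁻¹ = i(S⁻¹A - A*S⁻¹)`. Expanding
`w_A(z)* w_A(z)` leaves `1 + Π* X Π`, and after this substitution `X` is `i` times a combination
of `R*S⁻¹`, `S⁻¹R` and `R*(S⁻¹A - A*S⁻¹)R`, with `R = (I - zA)⁻¹`. Writing `S⁻¹R` as
`R*(I - z̄A*)S⁻¹R` and `R*S⁻¹` as `R*S⁻¹(I - zA)R`, all terms containing `A` cancel and
`X = i(z̄ - z)R*S⁻¹R`.
-/

open ContinuousLinearMap

theorem resolvent_sandwich_eq {k B : Type*} [CommRing k] [Ring B] [Algebra k B]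
    (A As X R Rs : B) (z w : k) (hR : (1 - z • A) * R = 1) (hRs : Rs * (1 - w • As) = 1) :
    w • (Rs * X) - z • (X * R) + (w * z) • (Rs * (X * A - As * X) * R) =
      (w - z) • (Rs * X * R) := by
  calc w • (Rs * X) - z • (X * R) + (w * z) • (Rs * (X * A - As * X) * R)
      = w • (Rs * X * ((1 - z • A) * R)) - z • (Rs * (1 - w • As) * X * R)
          + (w * z) • (Rs * (X * A - As * X) * R) := by
        rw [hR, hRs, mul_one, one_mul]
    _ = (w - z) • (Rs * X * R) := by
      simp only [mul_sub, sub_mul, mul_one, one_mul, smul_mul_assoc, mul_smul_comm, mul_assoc]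
      module

theorem one_add_smul_comp_mul_one_add_smul_comp {𝕜 E F : Type*} [NormedField 𝕜]
    [NormedAddCommGroup E] [NormedSpace 𝕜 E] [NormedAddCommGroup F] [NormedSpace 𝕜 F]
    (U : E →L[𝕜] F) (V : F →L[𝕜] E) (K L : F →L[𝕜] F) (a b : 𝕜) :
    (1 + a • V.comp (K.comp U)) * (1 + b • V.comp (L.comp U)) =
      1 + V.comp ((a • K + b • L + (a * b) • (K * U.comp V * L)).comp U) := by
  simp only [mul_add, add_mul, mul_one, one_mul, smul_mul_assoc, mul_smul_comm,
    mul_def, comp_add, add_comp, comp_smul, smul_comp, comp_assoc]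
  module

theorem inv_mul_commutator_mul_inv {B : Type*} [Ring B] {A As S Sinv : B}
    (h1 : S * Sinv = 1) (h2 : Sinv * S = 1) :
    Sinv * (A * S - S * As) * Sinv = Sinv * A - As * Sinv := by
  simp only [mul_sub, sub_mul, mul_assoc, h1, mul_one]
  rw [← mul_assoc Sinv S, h2, one_mul]

theorem stmt_13_general (m : ℕ) (H : Type*) [NormedAddCommGroup H]
    [InnerProductSpace ℂ H] [CompleteSpace H]
    (A S Sinv : H →L[ℂ] H) (Pi0 : EuclideanSpace ℂ (Fin m) →L[ℂ] H)
    (hSsa : IsSelfAdjoint S)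
    (hS1 : S * Sinv = 1) (hS2 : Sinv * S = 1)
    (hid : A * S - S * adjoint A = (-Complex.I) • (Pi0.comp (adjoint Pi0)))
    (z : ℂ) (R : H →L[ℂ] H)
    (hR1 : (1 - z • A) * R = 1)
    (w : EuclideanSpace ℂ (Fin m) →L[ℂ] EuclideanSpace ℂ (Fin m))
    (hw : w = 1 - (Complex.I * z) • ((adjoint Pi0).comp (Sinv.comp (R.comp Pi0)))) :
    (adjoint w) * w =
      1 + (Complex.I * (starRingEnd ℂ z - z)) •
        ((adjoint Pi0).comp ((adjoint R).comp (Sinv.comp (R.comp Pi0)))) := by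
  have hSinv : adjoint Sinv = Sinv := by
    let _ : Invertible S := ⟨Sinv, hS2, hS1⟩
    exact ((IsSelfAdjoint.invOf_iff S).mpr hSsa).adjoint_eq
  have hRadj : adjoint R * (1 - starRingEnd ℂ z • adjoint A) = 1 := by
    simpa [← star_eq_adjoint, star_mul, star_sub, star_smul] using congrArg star hR1
  have hw_adj : adjoint w =
      1 + (Complex.I * starRingEnd ℂ z) • (adjoint Pi0).comp ((adjoint R * Sinv).comp Pi0) := by
    rw [hw, map_sub, adjoint_one, map_smulₛₗ, adjoint_comp, adjoint_comp, adjoint_comp,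
      adjoint_adjoint, hSinv, map_mul, Complex.conj_I, neg_mul, neg_smul, sub_neg_eq_add]
    rfl
  have hw_add : w = 1 + (-(Complex.I * z)) • (adjoint Pi0).comp ((Sinv * R).comp Pi0) := by
    rw [hw, neg_smul, ← sub_eq_add_neg]
    rfl
  have hmid :
      Sinv * Pi0.comp (adjoint Pi0) * Sinv = Complex.I • (Sinv * A - adjoint A * Sinv) := by
    rw [← inv_mul_commutator_mul_inv hS1 hS2, hid, mul_smul_comm, smul_mul_assoc, smul_smul,
      mul_neg, Complex.I_mul_I, neg_neg, one_smul]
  have hcross : adjoint R * Sinv * Pi0.comp (adjoint Pi0) * (Sinv * R) =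
      Complex.I • (adjoint R * (Sinv * A - adjoint A * Sinv) * R) := by
    calc adjoint R * Sinv * Pi0.comp (adjoint Pi0) * (Sinv * R)
        = adjoint R * (Sinv * Pi0.comp (adjoint Pi0) * Sinv) * R := by simp only [mul_assoc]
      _ = _ := by rw [hmid, mul_smul_comm, smul_mul_assoc]
  have hscal : Complex.I * starRingEnd ℂ z * -(Complex.I * z) * Complex.I =
      Complex.I * (starRingEnd ℂ z * z) := by
    linear_combination (-(Complex.I * starRingEnd ℂ z * z)) * Complex.I_mul_I
  have hsandwich :=
    resolvent_sandwich_eq A (adjoint A) Sinv R (adjoint R) z (starRingEnd ℂ z) hR1 hRadj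
  rw [hw_adj, hw_add, one_add_smul_comp_mul_one_add_smul_comp, hcross, smul_smul, hscal,
    show (adjoint R).comp (Sinv.comp (R.comp Pi0)) = (adjoint R * Sinv * R).comp Pi0 from rfl,
    ← comp_smul, ← smul_comp]
  congr 3
  linear_combination (norm := module) Complex.I • hsandwich

/-- For an S-node `AS - SA* = -iΠΠ*` the transfer function
`w_A(z) = I - izΠ*S⁻¹(I - zA)⁻¹Π` satisfies
`w_A(z)* w_A(z) = I + i(z̄ - z) Π*(I - z̄A*)⁻¹ S⁻¹ (I - zA)⁻¹ Π`. -/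
theorem stmt_13 (m : ℕ) (H : Type*) [NormedAddCommGroup H]
    [InnerProductSpace ℂ H] [CompleteSpace H]
    (A S Sinv : H →L[ℂ] H) (Pi0 : EuclideanSpace ℂ (Fin m) →L[ℂ] H)
    (hSsa : IsSelfAdjoint S)
    (hSpos : ∀ f, f ≠ 0 → 0 < (inner ℂ (S f) f : ℂ).re)
    (hS1 : S * Sinv = 1) (hS2 : Sinv * S = 1)
    (hid : A * S - S * adjoint A = (-Complex.I) • (Pi0.comp (adjoint Pi0)))
    (z : ℂ) (R : H →L[ℂ] H)
    (hR1 : (1 - z • A) * R = 1) (hR2 : R * (1 - z • A) = 1)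
    (w : EuclideanSpace ℂ (Fin m) →L[ℂ] EuclideanSpace ℂ (Fin m))
    (hw : w = 1 - (Complex.I * z) • ((adjoint Pi0).comp (Sinv.comp (R.comp Pi0)))) :
    (adjoint w) * w =
      1 + (Complex.I * (starRingEnd ℂ z - z)) •
        ((adjoint Pi0).comp ((adjoint R).comp (Sinv.comp (R.comp Pi0)))) :=
  stmt_13_general m H A S Sinv Pi0 hSsa hS1 hS2 hid z R hR1 w hw
end

section
/- Let f : ℂ₊' → ℂ^{m2×m1} be analytic and non-expansive (‖f(z)‖ ≤ 1) on the half-plane {Im z > M}, and suppose there exists r > 0 with ∫₀ʳ e^{2i(x-r)z} F(x) dx = O(1/√(Im z)) uniformly in Re z as Im z → ∞, where F ∈ L²((0,r); ℂ^{m2×m1}). Then ∫₀ʳ e^{2i(x-r)z} F(x) dx ≡ 0 for all z ∈ ℂ, and hence F(x) = 0 for almost every x ∈ (0,r). -/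
open MeasureTheory
open scoped Matrix.Norms.L2Operator

/-!
The transform `G z = ∫₀ʳ e^{2i(x-r)z} F(x) dx` is entire, and since `|e^{2i(x-r)z}| = e^{2(r-x) Im z}`
it is bounded on every half-plane `Im z ≤ T`. Together with the assumed decay as `Im z → ∞` this
makes `G` bounded, hence constant by Liouville, hence zero. At the real points `z = -πn/r` the
kernel is the `n`-th Fourier character of period `r` (the factor `e^{-2irz} = e^{2πin}` is `1`),
so every Fourier coefficient of every scalar functional of `F` vanishes, and Parseval gives `F = 0`.
-/

open Set Filter Topology Complex
open scoped Real

section Liouville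

variable {E : Type*} [NormedAddCommGroup E]

lemma tendsto_comap_im_atTop_of_norm_le_div_sqrt {h : ℂ → E} {C M₀ : ℝ}
    (hh : ∀ z : ℂ, M₀ ≤ z.im → ‖h z‖ ≤ C / √z.im) : Tendsto h (comap im atTop) (𝓝 0) := by
  refine squeeze_zero_norm' ((eventually_ge_atTop M₀).comap im |>.mono hh) ?_
  have hdiv : Tendsto (fun t : ℝ => C / √t) atTop (𝓝 0) :=
    tendsto_const_nhds.div_atTop Real.tendsto_sqrt_atTop
  exact hdiv.comp tendsto_comap

lemma Differentiable.eq_zero_of_tendsto_comap_im_atTop [NormedSpace ℂ E] {h : ℂ → E}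
    (hd : Differentiable ℂ h) (hlow : ∀ T, ∃ B, ∀ z : ℂ, z.im ≤ T → ‖h z‖ ≤ B)
    (hlim : Tendsto h (comap im atTop) (𝓝 0)) (z : ℂ) : h z = 0 := by
  obtain ⟨T, hT⟩ := (eventually_comap.1 (hlim.norm.eventually
    (ge_mem_nhds (norm_zero.trans_lt one_pos)))).exists_forall_of_atTop
  obtain ⟨B, hB⟩ := hlow T
  have hbdd : Bornology.IsBounded (range h) := by
    refine isBounded_iff_forall_norm_le.2 ⟨max B 1, ?_⟩
    rintro _ ⟨w, rfl⟩
    rcases le_total w.im T with hw | hw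
    · exact (hB w hw).trans (le_max_left _ _)
    · exact (hT w.im hw w rfl).trans (le_max_right _ _)
  have hconst : h = fun _ => h z := funext fun w => hd.apply_eq_apply_of_bounded hbdd w z
  have : (comap im atTop).NeBot := atTop_neBot.comap_of_surj im_surjective
  rw [hconst] at hlim
  exact tendsto_nhds_unique tendsto_const_nhds hlim

end Liouville

lemma ae_eq_zero_of_fourierCoeffOn_eq_zero {a b : ℝ} (hab : a < b) {f : ℝ → ℂ}
    (hf : MemLp f 2 (volume.restrict (Ioc a b))) (h : ∀ n, fourierCoeffOn hab f n = 0) :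
    f =ᵐ[volume.restrict (Ioc a b)] 0 := by
  have parseval := hasSum_sq_fourierCoeffOn hab hf
  simp only [h, norm_zero, ne_eq, OfNat.ofNat_ne_zero, not_false_eq_true, zero_pow] at parseval
  have hsq : ∫ x in Ioc a b, ‖f x‖ ^ 2 = 0 := by
    rw [← intervalIntegral.integral_of_le hab.le]
    simpa [(sub_pos.2 hab).ne'] using hasSum_zero.unique parseval
  rw [integral_eq_zero_iff_of_nonneg (fun x => by positivity)
    (hf.integrable_norm_pow two_ne_zero)] at hsq
  filter_upwards [hsq] with x hx
  simpa using hx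

lemma norm_cexp_two_I_mul_le {r x T : ℝ} {z : ℂ} (hx : x ∈ Ioo 0 r) (hz : z.im ≤ T)
    (hT : 0 ≤ T) : ‖cexp (2 * I * ((x : ℂ) - r) * z)‖ ≤ Real.exp (2 * r * T) := by
  have hre : (2 * I * ((x : ℂ) - r) * z).re = 2 * (r - x) * z.im := by
    simp only [mul_re, mul_im, re_ofNat, im_ofNat, I_re, I_im, sub_re, sub_im, ofReal_re,
      ofReal_im]
    ring
  rw [norm_exp, hre, Real.exp_le_exp]
  nlinarith [hx.1, hx.2]

section FiniteFourierLaplace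

variable {E : Type*} [NormedAddCommGroup E] [NormedSpace ℂ E] {r : ℝ} {F : ℝ → E}

noncomputable def finiteFourierLaplace (r : ℝ) (F : ℝ → E) (z : ℂ) : E :=
  ∫ x in Ioo (0:ℝ) r, cexp (2 * I * ((x : ℂ) - (r : ℂ)) * z) • F x

lemma integrableOn_cexp_two_I_mul_smul (hF : IntegrableOn F (Ioo 0 r)) (z : ℂ) :
    IntegrableOn (fun x : ℝ => cexp (2 * I * ((x : ℂ) - r) * z) • F x) (Ioo 0 r) := by
  refine Integrable.bdd_smul hF (Real.exp (2 * r * |z.im|)) (by fun_prop) ?_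
  filter_upwards [ae_restrict_mem measurableSet_Ioo] with x hx
  exact norm_cexp_two_I_mul_le hx (le_abs_self _) (abs_nonneg _)

lemma norm_finiteFourierLaplace_le (hF : IntegrableOn F (Ioo 0 r)) {T : ℝ} {z : ℂ}
    (hz : z.im ≤ T) (hT : 0 ≤ T) :
    ‖finiteFourierLaplace r F z‖ ≤ Real.exp (2 * r * T) * ∫ x in Ioo 0 r, ‖F x‖ := by
  rw [← integral_const_mul]
  refine norm_integral_le_of_norm_le (hF.norm.const_mul _) ?_
  filter_upwards [ae_restrict_mem measurableSet_Ioo] with x hx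
  rw [norm_smul]
  exact mul_le_mul_of_nonneg_right (norm_cexp_two_I_mul_le hx hz hT) (norm_nonneg _)

lemma differentiable_finiteFourierLaplace (hF : IntegrableOn F (Ioo 0 r)) :
    Differentiable ℂ (finiteFourierLaplace r F) := by
  intro z₀
  set T := |z₀.im| + 1
  have hbound : ∀ᵐ x : ℝ ∂volume.restrict (Ioo 0 r), ∀ z ∈ Metric.ball z₀ 1,
      ‖(2 * I * ((x : ℂ) - r) * cexp (2 * I * ((x : ℂ) - r) * z)) • F x‖
        ≤ 2 * r * Real.exp (2 * r * T) * ‖F x‖ := by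
    filter_upwards [ae_restrict_mem measurableSet_Ioo] with x hx z hz
    have hzT : z.im ≤ T := by
      have := (abs_im_le_norm (z - z₀)).trans (mem_ball_iff_norm.1 hz).le
      rw [sub_im] at this
      linarith [abs_le.1 this, le_abs_self z₀.im]
    have hxr : ‖2 * I * ((x : ℂ) - r)‖ ≤ 2 * r := by
      rw [norm_mul, norm_mul, norm_ofNat, norm_I, mul_one, ← ofReal_sub, norm_real,
        Real.norm_eq_abs, abs_sub_comm, abs_of_pos (sub_pos.2 hx.2)]
      linarith [hx.1]
    rw [norm_smul, norm_mul]
    gcongr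
    · linarith [hx.1, hx.2]
    · exact norm_cexp_two_I_mul_le hx hzT (by positivity)
  refine (hasDerivAt_integral_of_dominated_loc_of_deriv_le (Metric.ball_mem_nhds z₀ one_pos)
    (.of_forall fun z => (integrableOn_cexp_two_I_mul_smul hF z).aestronglyMeasurable)
    (integrableOn_cexp_two_I_mul_smul hF z₀)
    (F' := fun z x => (2 * I * ((x : ℂ) - r) * cexp (2 * I * ((x : ℂ) - r) * z)) • F x)
    ((by fun_prop : Continuous _).aestronglyMeasurable.smul hF.aestronglyMeasurable) hbound
    (hF.norm.const_mul _) ?_).2.differentiableAt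
  filter_upwards with x z _
  exact (((hasDerivAt_id z).const_mul _).cexp.congr_deriv (by simp [mul_comm])).smul_const (F x)

lemma finiteFourierLaplace_eq_zero_of_norm_le_div_sqrt (hF : IntegrableOn F (Ioo 0 r))
    {C M₀ : ℝ} (hdecay : ∀ z : ℂ, M₀ ≤ z.im → ‖finiteFourierLaplace r F z‖ ≤ C / √z.im)
    (z : ℂ) : finiteFourierLaplace r F z = 0 :=
  (differentiable_finiteFourierLaplace hF).eq_zero_of_tendsto_comap_im_atTop
    (fun T => ⟨_, fun _ hz => norm_finiteFourierLaplace_le hF (hz.trans (le_max_left T 0))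
      (le_max_right T 0)⟩)
    (tendsto_comap_im_atTop_of_norm_le_div_sqrt hdecay) z

lemma fourierCoeffOn_eq_smul_finiteFourierLaplace (hr : 0 < r) (F : ℝ → E) (n : ℤ) :
    fourierCoeffOn hr F n = r⁻¹ • finiteFourierLaplace r F (-(π * n / r)) := by
  rw [fourierCoeffOn_eq_integral, intervalIntegral.integral_of_le hr.le,
    integral_Ioc_eq_integral_Ioo, sub_zero, one_div, finiteFourierLaplace]
  congr 1
  refine setIntegral_congr_fun measurableSet_Ioo fun x _ => ?_
  have hr' : (r : ℂ) ≠ 0 := ofReal_ne_zero.2 hr.ne'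
  have hphase : 2 * I * ((x : ℂ) - r) * -(π * n / r)
      = 2 * π * I * ((-n : ℤ) : ℂ) * x / r + n * (2 * π * I) := by
    push_cast
    field_simp
    ring
  rw [fourier_coe_apply, hphase, exp_add, exp_int_mul_two_pi_mul_I, mul_one]

lemma ContinuousLinearMap.map_finiteFourierLaplace [CompleteSpace E] {E' : Type*}
    [NormedAddCommGroup E'] [NormedSpace ℂ E'] [CompleteSpace E'] (c : E →L[ℂ] E')
    (hF : IntegrableOn F (Ioo 0 r)) (z : ℂ) :
    c (finiteFourierLaplace r F z) = finiteFourierLaplace r (fun x => c (F x)) z := by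
  rw [finiteFourierLaplace, ← c.integral_comp_comm (integrableOn_cexp_two_I_mul_smul hF z)]
  simp only [map_smul, finiteFourierLaplace]

lemma ae_eq_zero_of_finiteFourierLaplace_eq_zero [CompleteSpace E] [SecondCountableTopology E]
    (hr : 0 < r) (hF : MemLp F 2 (volume.restrict (Ioo 0 r)))
    (h : ∀ n : ℤ, finiteFourierLaplace r F (-(π * n / r)) = 0) :
    F =ᵐ[volume.restrict (Ioo 0 r)] 0 := by
  have hIoo : volume.restrict (Ioo 0 r) = volume.restrict (Ioc 0 r) :=
    Measure.restrict_congr_set Ioo_ae_eq_Ioc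
  refine ae_eq_zero_of_forall_dual ℂ fun c => ?_
  rw [hIoo]
  refine ae_eq_zero_of_fourierCoeffOn_eq_zero hr (hIoo ▸ c.comp_memLp' hF) fun n => ?_
  rw [fourierCoeffOn_eq_smul_finiteFourierLaplace,
    ← c.map_finiteFourierLaplace (hF.integrable one_le_two), h n, map_zero, smul_zero]

end FiniteFourierLaplace

theorem stmt_17_general (m1 m2 : ℕ)
    (r : ℝ) (hr : 0 < r)
    (F : ℝ → Matrix (Fin m2) (Fin m1) ℂ)
    (hF : MemLp F 2 (volume.restrict (Set.Ioo 0 r)))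
    (g : ℂ → Matrix (Fin m2) (Fin m1) ℂ)
    (hg : ∀ z, g z = ∫ x in Set.Ioo (0:ℝ) r,
      Complex.exp (2 * Complex.I * ((x : ℂ) - (r : ℂ)) * z) • F x)
    (hbd : ∃ C M₀ : ℝ, ∀ z : ℂ, M₀ ≤ z.im → ‖g z‖ ≤ C / Real.sqrt z.im) :
    (∀ z : ℂ, g z = 0) ∧
      ∀ᵐ x ∂(volume.restrict (Set.Ioo (0:ℝ) r)), F x = 0 := by
  obtain rfl : g = finiteFourierLaplace r F := funext hg
  obtain ⟨C, M₀, hdecay⟩ := hbd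
  have hzero := finiteFourierLaplace_eq_zero_of_norm_le_div_sqrt (hF.integrable one_le_two) hdecay
  exact ⟨hzero, ae_eq_zero_of_finiteFourierLaplace_eq_zero hr hF fun n => hzero _⟩

/-- If the Fourier–Laplace transform `∫₀ʳ e^{2i(x-r)z}F(x)dx` of an `L²` matrix
function `F` is `O(1/√Im z)` uniformly in `Re z` as `Im z → ∞`, then it vanishes
identically and `F = 0` a.e. on `(0,r)`. (The analytic non-expansive function
`f` provides the context of the original statement.) -/
theorem stmt_17 (m1 m2 : ℕ) (M : ℝ) (hM : 0 < M)
    (f : ℂ → Matrix (Fin m2) (Fin m1) ℂ)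
    (hf : DifferentiableOn ℂ f {z : ℂ | M < z.im})
    (hfne : ∀ z : ℂ, M < z.im → ‖f z‖ ≤ 1)
    (r : ℝ) (hr : 0 < r)
    (F : ℝ → Matrix (Fin m2) (Fin m1) ℂ)
    (hF : MemLp F 2 (volume.restrict (Set.Ioo 0 r)))
    (g : ℂ → Matrix (Fin m2) (Fin m1) ℂ)
    (hg : ∀ z, g z = ∫ x in Set.Ioo (0:ℝ) r,
      Complex.exp (2 * Complex.I * ((x : ℂ) - (r : ℂ)) * z) • F x)
    (hbd : ∃ C M₀ : ℝ, ∀ z : ℂ, M₀ ≤ z.im → ‖g z‖ ≤ C / Real.sqrt z.im) :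
    (∀ z : ℂ, g z = 0) ∧
      ∀ᵐ x ∂(volume.restrict (Set.Ioo (0:ℝ) r)), F x = 0 :=
  stmt_17_general m1 m2 r hr F hF g hg hbd
end

section
/- Let β : [0,l] → ℂ^{m1×m} and γ : [0,l] → ℂ^{m2×m} be continuously differentiable with ββ* ≡ I_{m1}, γγ* ≡ I_{m2}, βγ* ≡ 0, β'β* ≡ 0, and γ'γ* ≡ 0 (m = m1+m2). Suppose θ : [0,l] → ℂ^{m1×m} is continuously differentiable with θγ* ≡ 0, βθ'* ≡ 0, and θ(0) = β(0). Then θ ≡ β. -/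
open Matrix

/-!
Since `[β; γ]` is unitary, `βᴴβ + γᴴγ = 1`, so `θγᴴ = 0` gives `θ = κβ` with `κ = θβᴴ`.
The product rule gives `κ' = θ'βᴴ + θβ'ᴴ`; the first term vanishes by `βθ'ᴴ = 0`, the second
because `θβ'ᴴ = κ(ββ'ᴴ)` and `ββ'ᴴ = (β'βᴴ)ᴴ = 0`. Hence `κ` is constant, equal to
`κ(0) = β(0)β(0)ᴴ = 1`, and `θ = β`.
-/

namespace Matrix

variable {k m n p R : Type*} [Fintype m] [Fintype n] [Fintype p]

theorem conjTranspose_mul_add_conjTranspose_mul_eq_one [DecidableEq m] [DecidableEq n]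
    [CommRing R] [StarRing R] {B : Matrix m (m ⊕ n) R} {C : Matrix n (m ⊕ n) R}
    (hBB : B * Bᴴ = 1) (hCC : C * Cᴴ = 1) (hBC : B * Cᴴ = 0) :
    Bᴴ * B + Cᴴ * C = 1 := by
  have hCB : C * Bᴴ = 0 := by simpa using congrArg conjTranspose hBC
  have hU : fromRows B C * fromCols Bᴴ Cᴴ = 1 := by
    rw [fromRows_mul_fromCols, hBB, hCC, hBC, hCB, fromBlocks_one]
  rw [← fromCols_mul_fromRows, mul_eq_one_comm.mp hU]

theorem eq_mul_conjTranspose_mul_of_mul_conjTranspose_eq_zero [DecidableEq p] [Semiring R]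
    [Star R] {B : Matrix m p R} {C : Matrix n p R} {T : Matrix k p R}
    (hBC : Bᴴ * B + Cᴴ * C = 1) (hT : T * Cᴴ = 0) : T = T * Bᴴ * B :=
  calc T = T * (Bᴴ * B + Cᴴ * C) := by rw [hBC, Matrix.mul_one]
    _ = T * Bᴴ * B := by rw [Matrix.mul_add, ← Matrix.mul_assoc, ← Matrix.mul_assoc, hT,
      Matrix.zero_mul, add_zero]

end Matrix

section Calculus

variable {k m n 𝕜 : Type*} [Fintype k]

theorem hasDerivWithinAt_mul_conjTranspose_apply [RCLike 𝕜]
    {F F' : ℝ → Matrix m k 𝕜} {G G' : ℝ → Matrix n k 𝕜} {s : Set ℝ} {x : ℝ}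
    (hF : ∀ a b, HasDerivWithinAt (fun t => F t a b) (F' x a b) s x)
    (hG : ∀ a b, HasDerivWithinAt (fun t => G t a b) (G' x a b) s x) (a : m) (b : n) :
    HasDerivWithinAt (fun t => (F t * (G t)ᴴ) a b)
      ((F' x * (G x)ᴴ + F x * (G' x)ᴴ) a b) s x := by
  simp only [Matrix.add_apply, mul_apply, conjTranspose_apply, ← Finset.sum_add_distrib]
  exact HasDerivWithinAt.fun_sum fun j _ => (hF a j).mul (hG b j).star

theorem Convex.matrix_eq_of_hasDerivWithinAt_apply_eq_zero {E : Type*} [NormedAddCommGroup E]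
    [NormedSpace ℝ E] {F : ℝ → Matrix m n E} {s : Set ℝ} (hs : Convex ℝ s)
    (hF : ∀ x ∈ s, ∀ a b, HasDerivWithinAt (fun t => F t a b) 0 s x)
    {x y : ℝ} (hx : x ∈ s) (hy : y ∈ s) : F x = F y := by
  ext a b
  have hle := hs.norm_image_sub_le_of_norm_hasDerivWithin_le (fun z hz => hF z hz a b)
    (fun _ _ => norm_zero.le) hy hx
  rw [zero_mul] at hle
  exact sub_eq_zero.mp (norm_le_zero_iff.mp hle)

end Calculus

theorem stmt_18_general (m1 m2 : ℕ) (l : ℝ)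
    (β β' θ θ' : ℝ → Matrix (Fin m1) (Fin m1 ⊕ Fin m2) ℂ)
    (γ : ℝ → Matrix (Fin m2) (Fin m1 ⊕ Fin m2) ℂ)
    (hβd : ∀ x ∈ Set.Icc (0:ℝ) l, ∀ a b,
      HasDerivWithinAt (fun s => β s a b) (β' x a b) (Set.Icc 0 l) x)
    (hθd : ∀ x ∈ Set.Icc (0:ℝ) l, ∀ a b,
      HasDerivWithinAt (fun s => θ s a b) (θ' x a b) (Set.Icc 0 l) x)
    (hββ : ∀ x ∈ Set.Icc (0:ℝ) l, β x * (β x)ᴴ = 1)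
    (hγγ : ∀ x ∈ Set.Icc (0:ℝ) l, γ x * (γ x)ᴴ = 1)
    (hβγ : ∀ x ∈ Set.Icc (0:ℝ) l, β x * (γ x)ᴴ = 0)
    (hβ'β : ∀ x ∈ Set.Icc (0:ℝ) l, β' x * (β x)ᴴ = 0)
    (hθγ : ∀ x ∈ Set.Icc (0:ℝ) l, θ x * (γ x)ᴴ = 0)
    (hβθ' : ∀ x ∈ Set.Icc (0:ℝ) l, β x * (θ' x)ᴴ = 0)
    (h0 : θ 0 = β 0) :
    ∀ x ∈ Set.Icc (0:ℝ) l, θ x = β x := by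
  have hθ : ∀ x ∈ Set.Icc (0:ℝ) l, θ x = θ x * (β x)ᴴ * β x := fun x hx =>
    eq_mul_conjTranspose_mul_of_mul_conjTranspose_eq_zero
      (conjTranspose_mul_add_conjTranspose_mul_eq_one (hββ x hx) (hγγ x hx) (hβγ x hx)) (hθγ x hx)
  have hκ' : ∀ x ∈ Set.Icc (0:ℝ) l, θ' x * (β x)ᴴ + θ x * (β' x)ᴴ = 0 := by
    intro x hx
    have hθ'β : θ' x * (β x)ᴴ = 0 := by simpa using congrArg conjTranspose (hβθ' x hx)
    have hββ' : β x * (β' x)ᴴ = 0 := by simpa using congrArg conjTranspose (hβ'β x hx)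
    rw [hθ'β, hθ x hx, Matrix.mul_assoc _ (β x), hββ', Matrix.mul_zero, zero_add]
  intro x hx
  have h0mem : (0:ℝ) ∈ Set.Icc 0 l := ⟨le_rfl, hx.1.trans hx.2⟩
  have hκ : θ x * (β x)ᴴ = θ 0 * (β 0)ᴴ :=
    (convex_Icc 0 l).matrix_eq_of_hasDerivWithinAt_apply_eq_zero (F := fun t => θ t * (β t)ᴴ)
      (fun y hy a b => by
        simpa only [hκ' y hy, Matrix.zero_apply] using
          hasDerivWithinAt_mul_conjTranspose_apply (hθd y hy) (hβd y hy) a b)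
      hx h0mem
  rw [hθ x hx, hκ, h0, hββ 0 h0mem, Matrix.one_mul]

/-- Uniqueness: if `θγᴴ ≡ 0`, `βθ'ᴴ ≡ 0` and `θ(0) = β(0)`, where `β, γ` are
the block rows of a unitary-valued `C¹` matrix function with `β'βᴴ ≡ 0` and
`γ'γᴴ ≡ 0`, then `θ ≡ β` on `[0, l]`. -/
theorem stmt_18 (m1 m2 : ℕ) (l : ℝ) (hl : 0 < l)
    (β β' θ θ' : ℝ → Matrix (Fin m1) (Fin m1 ⊕ Fin m2) ℂ)
    (γ γ' : ℝ → Matrix (Fin m2) (Fin m1 ⊕ Fin m2) ℂ)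
    (hβd : ∀ x ∈ Set.Icc (0:ℝ) l, ∀ a b,
      HasDerivWithinAt (fun s => β s a b) (β' x a b) (Set.Icc 0 l) x)
    (hβ'c : ∀ a b, ContinuousOn (fun x => β' x a b) (Set.Icc 0 l))
    (hγd : ∀ x ∈ Set.Icc (0:ℝ) l, ∀ a b,
      HasDerivWithinAt (fun s => γ s a b) (γ' x a b) (Set.Icc 0 l) x)
    (hγ'c : ∀ a b, ContinuousOn (fun x => γ' x a b) (Set.Icc 0 l))
    (hθd : ∀ x ∈ Set.Icc (0:ℝ) l, ∀ a b,
      HasDerivWithinAt (fun s => θ s a b) (θ' x a b) (Set.Icc 0 l) x)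
    (hθ'c : ∀ a b, ContinuousOn (fun x => θ' x a b) (Set.Icc 0 l))
    (hββ : ∀ x ∈ Set.Icc (0:ℝ) l, β x * (β x)ᴴ = 1)
    (hγγ : ∀ x ∈ Set.Icc (0:ℝ) l, γ x * (γ x)ᴴ = 1)
    (hβγ : ∀ x ∈ Set.Icc (0:ℝ) l, β x * (γ x)ᴴ = 0)
    (hβ'β : ∀ x ∈ Set.Icc (0:ℝ) l, β' x * (β x)ᴴ = 0)
    (hγ'γ : ∀ x ∈ Set.Icc (0:ℝ) l, γ' x * (γ x)ᴴ = 0)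
    (hθγ : ∀ x ∈ Set.Icc (0:ℝ) l, θ x * (γ x)ᴴ = 0)
    (hβθ' : ∀ x ∈ Set.Icc (0:ℝ) l, β x * (θ' x)ᴴ = 0)
    (h0 : θ 0 = β 0) :
    ∀ x ∈ Set.Icc (0:ℝ) l, θ x = β x :=
  stmt_18_general m1 m2 l β β' θ θ' γ hβd hθd hββ hγγ hβγ hβ'β hθγ hβθ' h0
end
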